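/- arXiv:2011.05213 — 8 statements merged into one kernel-verified Lean document; each statement's English description precedes it below -/
import Mathlib

section
/- Every non-empty word over a totally ordered alphabet can be uniquely written as a concatenation of a lexicographically non-increasing sequence of Lyndon words (the Chen-Fox-Lyndon theorem). -/
/-- A Lyndon word: a nonempty word strictly lexicographically smaller than
all of its nontrivial cyclic rotations. -/
def IsLyndon {α : Type*} [LinearOrder α] (w : List α) : Prop :=
  w ≠ [] ∧ ∀ i, 0 < i → i < w.length → w < w.rotate i

namespace CFL

open List

variable {α : Type*} [LinearOrder α]

theorem list_lt_iff (l l' : List α) : l < l' ↔ List.Lex (· < ·) l l' := Iff.rfl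

theorem lt_append_right : ∀ (x : List α) {t : List α}, t ≠ [] → x < x ++ t
  | [], [], ht => absurd rfl ht
  | [], _ :: _, _ => List.Lex.nil
  | _ :: x, t, ht => List.Lex.cons (lt_append_right x ht)

theorem le_of_prefix {x y : List α} (h : x <+: y) : x ≤ y := by
  obtain ⟨t, rfl⟩ := h
  rcases eq_or_ne t [] with rfl | ht
  · simp
  · exact le_of_lt (lt_append_right x ht)

theorem lt_of_prefix_ne {x y : List α} (h : x <+: y) (hne : x ≠ y) : x < y := by
  obtain ⟨t, rfl⟩ := h
  rcases eq_or_ne t [] with rfl | ht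
  · simp at hne
  · exact lt_append_right x ht

/-- Key lemma: if `x < y` and `x` is not a prefix of `y`, appending anything preserves `<`. -/
theorem lt_append_of_not_prefix :
    ∀ {x y : List α}, List.Lex (· < ·) x y → ¬ x <+: y →
      ∀ a b : List α, List.Lex (· < ·) (x ++ a) (y ++ b)
  | _, _, .nil, hnp, _, _ => absurd List.nil_prefix hnp
  | _, _, .cons h, hnp, a, b =>
      .cons (lt_append_of_not_prefix h
        (fun hp => hnp (List.cons_prefix_cons.2 ⟨rfl, hp⟩)) a b)
  | _, _, .rel h, _, _, _ => .rel h

theorem lt_append_of_length_le {x y : List α} (h : x < y) (hl : y.length ≤ x.length)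
    (a b : List α) : x ++ a < y ++ b := by
  refine lt_append_of_not_prefix h (fun hp => ?_) a b
  have := hp.eq_of_length (le_antisymm hp.length_le hl)
  exact absurd h (this ▸ lt_irrefl _)

theorem append_lt_append_left_iff :
    ∀ (u x y : List α), u ++ x < u ++ y ↔ x < y
  | [], x, y => Iff.rfl
  | a :: u, x, y => by
    rw [list_lt_iff, cons_append, cons_append, List.lex_cons_iff]
    exact append_lt_append_left_iff u x y

/-- Characterization of Lyndon words via proper suffixes. -/
theorem isLyndon_iff {w : List α} :
    IsLyndon w ↔ w ≠ [] ∧ ∀ i, 0 < i → i < w.length → w < w.drop i := by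
  constructor
  · rintro ⟨hne, hrot⟩
    refine ⟨hne, fun i hi hil => ?_⟩
    by_contra hcon
    have htd : w.take i ++ w.drop i = w := take_append_drop i w
    set s := w.drop i with hs
    set t := w.take i with ht
    have hlen : s.length = w.length - i := by rw [hs]; exact length_drop
    have htlen : t.length = i := by rw [ht, length_take]; omega
    have hslt : s < w := by
      rcases lt_or_eq_of_le (le_of_not_gt hcon) with h | h
      · exact h
      · exfalso; have := congrArg List.length h; omega
    have hrot1 : w < s ++ t := by
      have := hrot i hi hil
      rwa [rotate_eq_drop_append_take (le_of_lt hil)] at this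
    by_cases hpre : s <+: w
    · obtain ⟨u, hu⟩ := hpre
      have hulen : u.length = i := by
        have := congrArg List.length hu
        rw [length_append] at this; omega
      have huts : u < t := by
        rw [← hu] at hrot1
        exact (append_lt_append_left_iff _ _ _).1 hrot1
      have hnup : ¬ u <+: t := fun hp => by
        have heq := hp.eq_of_length (by omega)
        exact absurd huts (heq ▸ lt_irrefl _)
      have h2 : u ++ s < t ++ s := lt_append_of_not_prefix huts hnup _ _
      rw [htd] at h2
      have hrot2 : w < u ++ s := by
        have h3 := hrot s.length (by omega) (by omega)
        rw [rotate_eq_drop_append_take (by omega)] at h3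
        have hd : w.drop s.length = u := by rw [← hu, drop_left]
        have htk : w.take s.length = s := by rw [← hu, take_left]
        rwa [hd, htk] at h3
      exact absurd h2 (not_lt_of_gt hrot2)
    · have h2 : s ++ t < w ++ [] :=
        lt_append_of_not_prefix hslt hpre _ _
      rw [append_nil] at h2
      exact absurd h2 (not_lt_of_gt hrot1)
  · rintro ⟨hne, hsuf⟩
    refine ⟨hne, fun i hi hil => ?_⟩
    rw [rotate_eq_drop_append_take (le_of_lt hil)]
    have h := hsuf i hi hil
    have := lt_append_of_length_le h (by rw [length_drop]; omega) [] (w.take i)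
    rwa [append_nil] at this

theorem singleton_isLyndon (a : α) : IsLyndon [a] :=
  ⟨cons_ne_nil a [], fun i hi hil => by simp at hil; omega⟩

theorem append_lt_right {u v : List α} (hu : IsLyndon u) (hv : IsLyndon v)
    (huv : u < v) : u ++ v < v := by
  by_cases hpre : u <+: v
  · obtain ⟨v', rfl⟩ := hpre
    have hv' : v' ≠ [] := by rintro rfl; rw [append_nil] at huv; exact lt_irrefl _ huv
    rw [append_lt_append_left_iff]
    have hulen : 0 < u.length := List.length_pos_iff.2 (isLyndon_iff.1 hu).1
    have h := (isLyndon_iff.1 hv).2 u.length hulen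
      (by rw [length_append]; have := List.length_pos_iff.2 hv'; omega)
    rwa [drop_left] at h
  · have := lt_append_of_not_prefix huv hpre v []
    rwa [append_nil] at this

theorem merge_isLyndon {u v : List α} (hu : IsLyndon u) (hv : IsLyndon v)
    (huv : u < v) : IsLyndon (u ++ v) := by
  rw [isLyndon_iff]
  have hune := (isLyndon_iff.1 hu).1
  have hvne := (isLyndon_iff.1 hv).1
  refine ⟨by simp [hune], fun i hi hil => ?_⟩
  rw [length_append] at hil
  rcases lt_trichotomy i u.length with h | h | h
  · rw [drop_append_of_le_length (le_of_lt h)]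
    have hlt := (isLyndon_iff.1 hu).2 i hi h
    exact lt_append_of_length_le hlt (by rw [length_drop]; omega) v v
  · subst h
    rw [drop_left]
    exact append_lt_right hu hv huv
  · have : i = u.length + (i - u.length) := by omega
    rw [this, drop_length_add_append]
    have hlt := (isLyndon_iff.1 hv).2 (i - u.length) (by omega) (by omega)
    exact lt_trans (append_lt_right hu hv huv) hlt

theorem exists_split_of_not_chain' {β : Type*} {r : β → β → Prop} :
    ∀ {L : List β}, ¬ L.Chain' r →
      ∃ L₁ a b L₂, L = L₁ ++ a :: b :: L₂ ∧ ¬ r a b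
  | [], h => absurd List.isChain_nil h
  | [x], h => absurd (List.isChain_singleton x) h
  | x :: y :: t, h => by
    by_cases hxy : r x y
    · have : ¬ (y :: t).Chain' r := fun hc => h (List.isChain_cons_cons.2 ⟨hxy, hc⟩)
      obtain ⟨L₁, a, b, L₂, heq, hr⟩ := exists_split_of_not_chain' this
      exact ⟨x :: L₁, a, b, L₂, by rw [heq]; rfl, hr⟩
    · exact ⟨[], x, y, t, rfl, hxy⟩

theorem exists_chain :
    ∀ (n : ℕ) (L : List (List α)), L.length ≤ n → (∀ l ∈ L, IsLyndon l) →
      ∃ M : List (List α), M.flatten = L.flatten ∧ (∀ l ∈ M, IsLyndon l) ∧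
        M.Chain' (fun a b => b ≤ a) := by
  intro n
  induction n with
  | zero =>
    intro L hL _
    have : L = [] := List.length_eq_zero_iff.1 (Nat.le_zero.1 hL)
    subst this
    exact ⟨[], rfl, by simp, List.isChain_nil⟩
  | succ n ih =>
    intro L hL hLy
    by_cases hc : L.Chain' (fun a b => b ≤ a)
    · exact ⟨L, rfl, hLy, hc⟩
    · obtain ⟨L₁, a, b, L₂, heq, hr⟩ := exists_split_of_not_chain' hc
      have hab : a < b := lt_of_not_ge hr
      have ha : IsLyndon a := hLy a (by rw [heq]; simp)
      have hb : IsLyndon b := hLy b (by rw [heq]; simp)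
      have hmerge : IsLyndon (a ++ b) := merge_isLyndon ha hb hab
      have hlen : (L₁ ++ (a ++ b) :: L₂).length ≤ n := by
        have := congrArg List.length heq
        simp at this ⊢; omega
      have hLy' : ∀ l ∈ L₁ ++ (a ++ b) :: L₂, IsLyndon l := by
        intro l hl
        rcases List.mem_append.1 hl with h | h
        · exact hLy l (by rw [heq]; exact List.mem_append.2 (Or.inl h))
        · rcases List.mem_cons.1 h with rfl | h
          · exact hmerge
          · exact hLy l (by rw [heq]; simp [h])
      obtain ⟨M, hM1, hM2, hM3⟩ := ih _ hlen hLy'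
      refine ⟨M, ?_, hM2, hM3⟩
      rw [hM1, heq]
      simp [List.flatten_append, List.append_assoc]

theorem nil_of_flatten_nil {L : List (List α)} (hLy : ∀ l ∈ L, IsLyndon l)
    (h : L.flatten = []) : L = [] := by
  cases L with
  | nil => rfl
  | cons a L' =>
    exfalso
    exact (hLy a (mem_cons_self)).1 ((List.flatten_eq_nil_iff.1 h) a (mem_cons_self))

/-- Every nonempty prefix of the flatten of a list of Lyndon words all `≤ a`
has a nonempty suffix that is `≤ a`. -/
theorem suffix_bound {a : List α} :
    ∀ (M : List (List α)), (∀ l ∈ M, IsLyndon l ∧ l ≤ a) →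
      ∀ r : List α, r ≠ [] → r <+: M.flatten →
        ∃ s, s ≠ [] ∧ s <:+ r ∧ s ≤ a
  | [], _, r, hr, hpre => absurd (List.prefix_nil.1 hpre) hr
  | b :: M', hM, r, hr, hpre => by
    rw [List.flatten_cons] at hpre
    have hb := hM b (mem_cons_self)
    rcases List.prefix_or_prefix_of_prefix hpre (List.prefix_append b M'.flatten) with h | h
    · -- r <+: b
      rcases eq_or_ne r b with rfl | hne
      · exact ⟨r, hr, suffix_refl r, hb.2⟩
      · exact ⟨r, hr, suffix_refl r, le_of_lt (lt_of_lt_of_le (lt_of_prefix_ne h hne) hb.2)⟩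
    · -- b <+: r
      obtain ⟨r', rfl⟩ := h
      rcases eq_or_ne r' [] with rfl | hr'
      · rw [append_nil]
        exact ⟨b, (hb.1).1, suffix_refl b, hb.2⟩
      · have hpre' : r' <+: M'.flatten := (List.prefix_append_right_inj b).1 hpre
        obtain ⟨s, hs1, hs2, hs3⟩ :=
          suffix_bound M' (fun l hl => hM l (mem_cons_of_mem b hl)) r' hr' hpre'
        exact ⟨s, hs1, hs2.trans (List.suffix_append b r'), hs3⟩

theorem prefix_length_le {w u a : List α} {L' : List (List α)}
    (hjoin : w = (a :: L').flatten) (hLy : ∀ l ∈ a :: L', IsLyndon l)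
    (hch : (a :: L').Chain' (fun x y => y ≤ x))
    (hu : IsLyndon u) (hpre : u <+: w) : u.length ≤ a.length := by
  by_contra hcon
  push_neg at hcon
  have haw : a <+: w := by rw [hjoin, List.flatten_cons]; exact List.prefix_append _ _
  have hau : a <+: u := List.prefix_of_prefix_length_le haw hpre (le_of_lt hcon)
  obtain ⟨u', rfl⟩ := hau
  have hu'ne : u' ≠ [] := by
    rintro rfl; rw [append_nil] at hcon; omega
  have hle' : ∀ l ∈ L', l ≤ a := by
    haveI : IsTrans (List α) (fun x y : List α => y ≤ x) :=
      ⟨fun _ _ _ h1 h2 => le_trans h2 h1⟩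
    have hp := List.isChain_iff_pairwise.1 hch
    exact fun l hl => (List.pairwise_cons.1 hp).1 l hl
  have hu'pre : u' <+: L'.flatten := by
    rw [hjoin, List.flatten_cons] at hpre
    exact (List.prefix_append_right_inj a).1 hpre
  obtain ⟨s, hs1, hs2, hs3⟩ :=
    suffix_bound L' (fun l hl => ⟨hLy l (mem_cons_of_mem a hl), hle' l hl⟩) u' hu'ne hu'pre
  -- s is a nonempty proper suffix of a ++ u'
  have hssuf : s <:+ a ++ u' := hs2.trans (List.suffix_append a u')
  obtain ⟨p, hp⟩ := hssuf
  have hplen : 0 < p.length := by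
    have h1 := congrArg List.length hp
    have h2 := hs2.length_le
    have h3 : 0 < a.length := List.length_pos_iff.2 (hLy a (mem_cons_self)).1
    rw [length_append, length_append] at h1
    omega
  have hslen : 0 < s.length := List.length_pos_iff.2 hs1
  have hdrop : (a ++ u').drop p.length = s := by rw [← hp, drop_left]
  have hlt : a ++ u' < s := by
    have h := (isLyndon_iff.1 hu).2 p.length hplen
      (by have := congrArg List.length hp; simp [length_append] at this ⊢; omega)
    rwa [hdrop] at h
  have hle2 : s ≤ a ++ u' := le_trans hs3 (le_of_prefix (List.prefix_append a u'))
  exact absurd hlt (not_lt_of_ge hle2)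

theorem uniq : ∀ (n : ℕ) (w : List α), w.length ≤ n →
    ∀ L M : List (List α),
      (w = L.flatten ∧ (∀ l ∈ L, IsLyndon l) ∧ L.Chain' (fun a b => b ≤ a)) →
      (w = M.flatten ∧ (∀ l ∈ M, IsLyndon l) ∧ M.Chain' (fun a b => b ≤ a)) →
      L = M := by
  intro n
  induction n with
  | zero =>
    intro w hw L M hL hM
    have hwnil : w = [] := List.length_eq_zero_iff.1 (Nat.le_zero.1 hw)
    subst hwnil
    rw [nil_of_flatten_nil hL.2.1 hL.1.symm, nil_of_flatten_nil hM.2.1 hM.1.symm]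
  | succ n ih =>
    intro w hw L M hL hM
    obtain ⟨hLj, hLy, hLc⟩ := hL
    obtain ⟨hMj, hMy, hMc⟩ := hM
    cases L with
    | nil =>
      simp at hLj
      subst hLj
      exact (nil_of_flatten_nil hMy hMj.symm).symm
    | cons a L' =>
      cases M with
      | nil =>
        simp at hMj
        subst hMj
        exact absurd hLj.symm (by simp [(hLy a (mem_cons_self)).1,
          List.flatten_eq_nil_iff, List.append_eq_nil_iff])
      | cons b M' =>
        have haw : a <+: w := by rw [hLj, List.flatten_cons]; exact List.prefix_append _ _
        have hbw : b <+: w := by rw [hMj, List.flatten_cons]; exact List.prefix_append _ _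
        have h1 : b.length ≤ a.length :=
          prefix_length_le hLj hLy hLc (hMy b (mem_cons_self)) hbw
        have h2 : a.length ≤ b.length :=
          prefix_length_le hMj hMy hMc (hLy a (mem_cons_self)) haw
        have hab : a = b :=
          (List.prefix_of_prefix_length_le haw hbw h2).eq_of_length (le_antisymm h2 h1)
        subst hab
        have hjoin : L'.flatten = M'.flatten := by
          rw [hLj, List.flatten_cons, List.flatten_cons] at hMj
          exact List.append_cancel_left hMj
        have halen : 0 < a.length := List.length_pos_iff.2 (hLy a (mem_cons_self)).1
        have hlen' : L'.flatten.length ≤ n := by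
          have := congrArg List.length hLj
          rw [List.flatten_cons, length_append] at this
          omega
        have := ih L'.flatten hlen' L' M'
          ⟨rfl, fun l hl => hLy l (mem_cons_of_mem a hl), hLc.tail⟩
          ⟨hjoin, fun l hl => hMy l (mem_cons_of_mem a hl), hMc.tail⟩
        rw [this]

theorem flatten_map_singleton (w : List α) : (w.map fun a => [a]).flatten = w := by
  induction w with
  | nil => rfl
  | cons a w ih => simp [ih]

end CFL

/-- **Chen–Fox–Lyndon theorem**: every nonempty word over a totally ordered
alphabet can be written uniquely as the concatenation of a lexicographically
non-increasing sequence of Lyndon words. -/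
theorem chen_fox_lyndon {α : Type*} [LinearOrder α] (w : List α) (hw : w ≠ []) :
    ∃! L : List (List α),
      w = L.flatten ∧ (∀ l ∈ L, IsLyndon l) ∧ L.Chain' (fun a b => b ≤ a) := by
  obtain ⟨M, hM1, hM2, hM3⟩ := CFL.exists_chain (w.map fun a => [a]).length
    (w.map fun a => [a]) le_rfl (by
      intro l hl
      obtain ⟨x, _, rfl⟩ := List.mem_map.1 hl
      exact CFL.singleton_isLyndon x)
  rw [CFL.flatten_map_singleton] at hM1
  refine ⟨M, ⟨hM1.symm, hM2, hM3⟩, fun N hN => ?_⟩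
  exact CFL.uniq w.length w le_rfl N M hN ⟨hM1.symm, hM2, hM3⟩
end

section
/- For any q ≥ 1 and n ≥ 1, the sum over all divisors d of n of d times the number of Lyndon words of length d over an alphabet of q letters equals q^n. -/
/-- The number of Lyndon words of length `d` over an alphabet with `q` letters. -/
noncomputable def lyndonCount (q d : ℕ) : ℕ :=
  Nat.card {w : List (Fin q) // w.length = d ∧ IsLyndon w}

namespace LyndonAux

variable {α : Type*}

/-- `rep u k` = `u` concatenated `k` times. -/
def rep (u : List α) : ℕ → List α
  | 0 => []
  | k + 1 => u ++ rep u k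

@[simp] theorem rep_zero (u : List α) : rep u 0 = [] := rfl
theorem rep_succ (u : List α) (k : ℕ) : rep u (k + 1) = u ++ rep u k := rfl

@[simp] theorem length_rep (u : List α) (k : ℕ) : (rep u k).length = k * u.length := by
  induction k with
  | zero => simp [rep]
  | succ k ih => simp [rep_succ, ih, Nat.succ_mul, Nat.add_comm]

theorem take_rep (u : List α) {k : ℕ} (hk : 1 ≤ k) :
    (rep u k).take u.length = u := by
  obtain ⟨k, rfl⟩ := Nat.exists_eq_add_of_le hk
  rw [Nat.add_comm, rep_succ, List.take_append_of_le_length le_rfl, List.take_length]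

private theorem aux_rot {u : List α} {j : ℕ} (hj : j ≤ u.length) (k : ℕ) :
    u.drop j ++ rep u k ++ u.take j = rep (u.rotate j) (k + 1) := by
  induction k with
  | zero =>
    simp [rep_succ, List.rotate_eq_drop_append_take hj]
  | succ k ih =>
    have h1 : u ++ rep u k = u.take j ++ (u.drop j ++ rep u k) := by
      rw [← List.append_assoc, List.take_append_drop]
    rw [rep_succ u k, h1, rep_succ _ (k + 1), ← ih,
      List.rotate_eq_drop_append_take hj]
    simp [List.append_assoc]

theorem rotate_rep {u : List α} {j : ℕ} (hj : j ≤ u.length) (k : ℕ) :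
    (rep u k).rotate j = rep (u.rotate j) k := by
  cases k with
  | zero => simp [rep]
  | succ k =>
    have hl : j ≤ (rep u (k + 1)).length := by
      simp only [length_rep]
      exact hj.trans (Nat.le_mul_of_pos_left _ k.succ_pos)
    rw [List.rotate_eq_drop_append_take hl, rep_succ,
      List.drop_append_of_le_length hj, List.take_append_of_le_length hj]
    exact aux_rot hj k

theorem rotate_rep_length (u : List α) (k : ℕ) :
    (rep u k).rotate u.length = rep u k := by
  rw [rotate_rep le_rfl, List.rotate_length]


/-! ### Minimal rotation periods -/

/-- The minimal positive rotation period. -/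
noncomputable def minPer (w : List α) : ℕ := sInf {j | 0 < j ∧ w.rotate j = w}

theorem periodSet_nonempty {w : List α} (hw : w ≠ []) :
    {j | 0 < j ∧ w.rotate j = w}.Nonempty :=
  ⟨w.length, List.length_pos_iff.2 hw, List.rotate_length w⟩

theorem minPer_pos {w : List α} (hw : w ≠ []) : 0 < minPer w :=
  (Nat.sInf_mem (periodSet_nonempty hw)).1

theorem rotate_minPer {w : List α} (hw : w ≠ []) : w.rotate (minPer w) = w :=
  (Nat.sInf_mem (periodSet_nonempty hw)).2

theorem minPer_le {w : List α} {j : ℕ} (hj : 0 < j) (h : w.rotate j = w) :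
    minPer w ≤ j :=
  Nat.sInf_le ⟨hj, h⟩

theorem rotate_mul {w : List α} {d : ℕ} (h : w.rotate d = w) (m : ℕ) :
    w.rotate (m * d) = w := by
  induction m with
  | zero => simp
  | succ m ih => rw [Nat.succ_mul, ← List.rotate_rotate, ih, h]

theorem minPer_dvd {w : List α} (hw : w ≠ []) {j : ℕ} (h : w.rotate j = w) :
    minPer w ∣ j := by
  have h1 : w.rotate (minPer w * (j / minPer w)) = w := by
    rw [Nat.mul_comm]; exact rotate_mul (rotate_minPer hw) _
  have h2 : w.rotate (j % minPer w) = w := by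
    have h3 : w.rotate (minPer w * (j / minPer w) + j % minPer w) = w := by
      rw [Nat.div_add_mod]; exact h
    rwa [← List.rotate_rotate, h1] at h3
  rcases Nat.eq_zero_or_pos (j % minPer w) with h0 | h0
  · exact Nat.dvd_of_mod_eq_zero h0
  · have ha := minPer_le h0 h2
    have hb := Nat.mod_lt j (minPer_pos hw)
    omega

theorem minPer_dvd_length {w : List α} (hw : w ≠ []) : minPer w ∣ w.length :=
  minPer_dvd hw (List.rotate_length w)

theorem minPer_le_length {w : List α} (hw : w ≠ []) : minPer w ≤ w.length :=
  Nat.le_of_dvd (List.length_pos_iff.2 hw) (minPer_dvd_length hw)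

theorem rotate_of_rotate {w : List α} {j : ℕ} (h : w.rotate j = w) (i : ℕ) :
    (w.rotate i).rotate j = w.rotate i := by
  rw [List.rotate_rotate, Nat.add_comm, ← List.rotate_rotate, h]

theorem exists_rotate_inv {w : List α} (hw : w ≠ []) (i : ℕ) :
    ∃ m, (w.rotate i).rotate m = w := by
  have hn0 : 0 < w.length := List.length_pos_iff.2 hw
  refine ⟨w.length - i % w.length, ?_⟩
  have h1 : i / w.length * w.length + i % w.length = i := Nat.div_add_mod' i w.length
  have h2 : i % w.length < w.length := Nat.mod_lt _ hn0
  have h3 : i + (w.length - i % w.length) = i / w.length * w.length + w.length := by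
    generalize i / w.length * w.length = c at h1 ⊢
    omega
  rw [List.rotate_rotate, h3, ← List.rotate_rotate,
    rotate_mul (List.rotate_length w) _, List.rotate_length]

theorem rotate_eq_iff {w : List α} (hw : w ≠ []) (i j : ℕ) :
    (w.rotate i).rotate j = w.rotate i ↔ w.rotate j = w := by
  constructor
  · intro h
    obtain ⟨m, hm⟩ := exists_rotate_inv hw i
    calc w.rotate j = ((w.rotate i).rotate m).rotate j := by rw [hm]
      _ = ((w.rotate i).rotate j).rotate m := by
          simp only [List.rotate_rotate]
          congr 1
          omega
      _ = w := by rw [h, hm]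
  · intro h; exact rotate_of_rotate h i

theorem minPer_rotate {w : List α} (hw : w ≠ []) (i : ℕ) :
    minPer (w.rotate i) = minPer w := by
  unfold minPer
  congr 1
  ext j
  exact and_congr_right fun _ => rotate_eq_iff hw i j

theorem rotate_injOn {w : List α} (hw : w ≠ []) {i j : ℕ}
    (hi : i < minPer w) (hj : j < minPer w) (h : w.rotate i = w.rotate j) :
    i = j := by
  have key : ∀ a b : ℕ, a ≤ b → b < minPer w → w.rotate a = w.rotate b → a = b := by
    intro a b hab hb hr
    by_contra hne
    have hpos : 0 < b - a := by omega
    have h1 : (w.rotate a).rotate (b - a) = w.rotate a := by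
      rw [List.rotate_rotate]
      rw [show a + (b - a) = b by omega, hr]
    have h2 : w.rotate (b - a) = w := (rotate_eq_iff hw a _).1 h1
    have := minPer_le hpos h2
    omega
  rcases le_total i j with hle | hle
  · exact key i j hle hj h
  · exact (key j i hle hi h.symm).symm

theorem minPer_rep {u : List α} (hu : u ≠ []) (hprim : minPer u = u.length)
    {k : ℕ} (hk : 1 ≤ k) : minPer (rep u k) = u.length := by
  have hrep : rep u k ≠ [] := by
    intro he
    have h := length_rep u k
    rw [he, List.length_nil] at h
    have h2 : 0 < k * u.length := Nat.mul_pos hk (List.length_pos_iff.2 hu)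
    omega
  have hupos : 0 < u.length := List.length_pos_iff.2 hu
  have hle : minPer (rep u k) ≤ u.length :=
    minPer_le hupos (rotate_rep_length u k)
  refine le_antisymm hle ?_
  set e := minPer (rep u k) with he
  have hepos : 0 < e := minPer_pos hrep
  have h1 : rep (u.rotate e) k = rep u k := by
    rw [← rotate_rep hle k]; exact rotate_minPer hrep
  have h2 : u.rotate e = u := by
    have := take_rep (u.rotate e) hk
    rw [List.length_rotate, h1, take_rep u hk] at this
    exact this.symm
  calc u.length = minPer u := hprim.symm
    _ ≤ e := minPer_le hepos h2


/-! ### Structure theorem: a word with period `d ∣ n` is a power -/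

theorem eq_rep_take {d : ℕ} (hd : 0 < d) :
    ∀ n (w : List α), w.length = n → d ∣ n → w.rotate d = w →
      w = rep (w.take d) (n / d) := by
  intro n
  induction n using Nat.strong_induction_on with
  | _ n ih =>
    intro w hwl hdvd hrot
    rcases Nat.eq_zero_or_pos n with rfl | hn
    · rw [List.length_eq_zero_iff.1 hwl]
      simp
    · have hdn : d ≤ n := Nat.le_of_dvd hn hdvd
      rcases eq_or_lt_of_le hdn with he | hlt
      · subst he
        rw [Nat.div_self hd, ← hwl, List.take_length]
        simp [rep]
      · have hdl : d ≤ w.length := by omega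
        have hu : (w.take d).length = d := by
          rw [List.length_take]; omega
        have hw' : (w.drop d).length = n - d := by
          rw [List.length_drop]; omega
        have hdvd' : d ∣ n - d := Nat.dvd_sub hdvd dvd_rfl
        have h2d : d ≤ n - d := Nat.le_of_dvd (by omega) hdvd'
        have hdw' : d ≤ (w.drop d).length := by omega
        have hcomm : w.drop d ++ w.take d = w.take d ++ w.drop d := by
          rw [List.take_append_drop]
          rw [← List.rotate_eq_drop_append_take hdl, hrot]
        have htake : (w.drop d).take d = w.take d := by
          have := congrArg (List.take d) hcomm
          rwa [List.take_append_of_le_length hdw',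
            List.take_append_of_le_length (le_of_eq hu.symm), List.take_take,
            Nat.min_self] at this
        have hdrop : (w.drop d).drop d ++ w.take d = w.drop d := by
          have := congrArg (List.drop d) hcomm
          rwa [List.drop_append_of_le_length hdw',
            List.drop_append_of_le_length (le_of_eq hu.symm),
            List.drop_take, Nat.sub_self, List.take_zero, List.nil_append] at this
        have hrot' : (w.drop d).rotate d = w.drop d := by
          rw [List.rotate_eq_drop_append_take hdw', htake]
          exact hdrop
        have hlt' : n - d < n := by omega
        have hrec := ih (n - d) hlt' (w.drop d) hw' hdvd' hrot'
        obtain ⟨c, hc⟩ := hdvd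
        have hc1 : 1 ≤ c := by
          rcases Nat.eq_zero_or_pos c with rfl | h
          · omega
          · exact h
        have hnd : n / d = c := by rw [hc, Nat.mul_div_cancel_left _ hd]
        have hndd : (n - d) / d = c - 1 := by
          rw [hc, show d * c - d = d * (c - 1) by
            rw [Nat.mul_sub, Nat.mul_one], Nat.mul_div_cancel_left _ hd]
        rw [hndd] at hrec
        rw [hnd, show c = (c - 1) + 1 by omega, rep_succ]
        conv_lhs => rw [← List.take_append_drop d w]
        rw [hrec, htake]


/-! ### Lyndon words -/

section Lyndon
variable [LinearOrder α]

theorem lyndon_primitive {w : List α} (h : IsLyndon w) : minPer w = w.length := by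
  have hw := h.1
  have hle := minPer_le_length hw
  rcases eq_or_lt_of_le hle with he | hlt
  · exact he
  · have h2 := h.2 (minPer w) (minPer_pos hw) hlt
    rw [rotate_minPer hw] at h2
    exact absurd h2 (lt_irrefl w)

theorem exists_lyndon_rotate {u : List α} (hu : u ≠ [])
    (hprim : minPer u = u.length) : ∃ i < u.length, IsLyndon (u.rotate i) := by
  have hul : 0 < u.length := List.length_pos_iff.2 hu
  obtain ⟨i₀, hi₀, hmin⟩ := Finset.exists_min_image (Finset.range u.length)
    (fun i => u.rotate i) ⟨0, Finset.mem_range.2 hul⟩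
  rw [Finset.mem_range] at hi₀
  refine ⟨i₀, hi₀, ?_, ?_⟩
  · intro h
    have := List.length_rotate u i₀
    rw [h, List.length_nil] at this
    omega
  · intro j hj hjlen
    rw [List.length_rotate] at hjlen
    have hmlt : (i₀ + j) % u.length < u.length := Nat.mod_lt _ hul
    have hrot : (u.rotate i₀).rotate j = u.rotate ((i₀ + j) % u.length) := by
      rw [List.rotate_rotate, List.rotate_mod]
    have hle2 : u.rotate i₀ ≤ u.rotate ((i₀ + j) % u.length) :=
      hmin _ (Finset.mem_range.2 hmlt)
    rcases lt_or_eq_of_le hle2 with hlt | heq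
    · rw [hrot]; exact hlt
    · exfalso
      have hij : i₀ = (i₀ + j) % u.length :=
        rotate_injOn hu (hprim ▸ hi₀) (hprim ▸ hmlt) heq
      rcases Nat.lt_or_ge (i₀ + j) u.length with hc | hc
      · rw [Nat.mod_eq_of_lt hc] at hij; omega
      · have hc2 : i₀ + j - u.length < u.length := by omega
        rw [Nat.mod_eq_sub_mod hc, Nat.mod_eq_of_lt hc2] at hij
        omega

theorem not_lyndon_rotate {v : List α} (hv : IsLyndon v) {j : ℕ} (hj : 0 < j)
    (hjl : j < v.length) : ¬IsLyndon (v.rotate j) := by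
  intro hv'
  have h1 : v < v.rotate j := hv.2 j hj hjl
  have h2 : v.rotate j < v := by
    have h3 := hv'.2 (v.length - j) (by omega)
      (by rw [List.length_rotate]; omega)
    rwa [List.rotate_rotate, show j + (v.length - j) = v.length by omega,
      List.rotate_length] at h3
  exact absurd (h1.trans h2) (lt_irrefl v)

theorem rep_ne_nil {u : List α} (hu : u ≠ []) {k : ℕ} (hk : 1 ≤ k) :
    rep u k ≠ [] := by
  intro he
  have h := length_rep u k
  rw [he, List.length_nil] at h
  have h2 : 0 < k * u.length := Nat.mul_pos hk (List.length_pos_iff.2 hu)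
  omega

theorem minPer_key {v : List α} (hLyn : IsLyndon v) {k : ℕ} (hk : 1 ≤ k) (i : ℕ) :
    minPer ((rep v k).rotate i) = v.length := by
  have hrep : rep v k ≠ [] := rep_ne_nil hLyn.1 hk
  rw [minPer_rotate hrep i, minPer_rep hLyn.1 (lyndon_primitive hLyn) hk]

end Lyndon

theorem rotate_eq_self_of_length {x : List α} {m : ℕ} (h : x.length = m) :
    x.rotate m = x := by
  rw [← h]; exact List.rotate_length x

theorem rotate_rep_mod {v : List α} {d : ℕ} (hv : v.length = d) (hd : 0 < d)
    (k t : ℕ) : (rep v k).rotate t = (rep v k).rotate (t % d) := by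
  have hper : (rep v k).rotate d = rep v k := by
    rw [← hv]; exact rotate_rep_length v k
  conv_lhs => rw [← Nat.div_add_mod t d]
  rw [← List.rotate_rotate, Nat.mul_comm d (t / d), rotate_mul hper]

/-! ### The bijection -/

/-- The map sending `(d, v, i)` with `d ∣ n`, `v` a Lyndon word of length `d`,
`i < d`, to the word `(v^(n/d)).rotate i` of length `n`. -/
def phi (q n : ℕ)
    (x : Σ d : {x // x ∈ n.divisors},
      {w : List (Fin q) // w.length = d.1 ∧ IsLyndon w} × Fin d.1) :
    {w : List (Fin q) // w.length = n} :=
  ⟨(rep x.2.1.1 (n / x.1.1)).rotate x.2.2.1, by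
    obtain ⟨⟨d, hd⟩, ⟨v, hv⟩, i⟩ := x
    obtain ⟨hdvd, hn0⟩ := Nat.mem_divisors.1 hd
    simp only [List.length_rotate, length_rep, hv.1]
    exact Nat.div_mul_cancel hdvd⟩

theorem phi_bijective (q n : ℕ) (hn : 1 ≤ n) : Function.Bijective (phi q n) := by
  constructor
  · -- injectivity
    rintro ⟨⟨d, hd⟩, ⟨v, hv⟩, i⟩ ⟨⟨d', hd'⟩, ⟨v', hv'⟩, i'⟩ h
    have hlist : (rep v (n / d)).rotate i.1 = (rep v' (n / d')).rotate i'.1 :=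
      congrArg Subtype.val h
    have hv1 : v.length = d := hv.1
    have hv1' : v'.length = d' := hv'.1
    have hilt : (i : ℕ) < d := i.2
    have hilt' : (i' : ℕ) < d' := i'.2
    obtain ⟨hdvd, -⟩ := Nat.mem_divisors.1 hd
    obtain ⟨hdvd', -⟩ := Nat.mem_divisors.1 hd'
    have hdpos : 0 < d := Nat.pos_of_mem_divisors hd
    have hdpos' : 0 < d' := Nat.pos_of_mem_divisors hd'
    have hk : 1 ≤ n / d := Nat.div_pos (Nat.le_of_dvd (by omega) hdvd) hdpos
    have hk' : 1 ≤ n / d' := Nat.div_pos (Nat.le_of_dvd (by omega) hdvd') hdpos'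
    -- d = d'
    have hdd : d = d' := by
      have h1 : minPer ((rep v (n / d)).rotate i.1) = d := by
        rw [minPer_key hv.2 hk, hv.1]
      have h2 : minPer ((rep v' (n / d')).rotate i'.1) = d' := by
        rw [minPer_key hv'.2 hk', hv'.1]
      rw [← h1, hlist, h2]
    subst hdd
    -- v = v'
    have hvne : v ≠ [] := hv.2.1
    have hrepne : rep v (n / d) ≠ [] := rep_ne_nil hvne hk
    have hlenrep : (rep v (n / d)).length = n := by
      rw [length_rep, hv.1]
      exact Nat.div_mul_cancel hdvd
    have hminrep : minPer (rep v (n / d)) = d := by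
      rw [minPer_rep hvne (lyndon_primitive hv.2) hk, hv.1]
    have hdle : d ≤ n := Nat.le_of_dvd (by omega) hdvd
    have hin : (i : ℕ) ≤ n := by omega
    have hin' : (i' : ℕ) ≤ n := by omega
    have h2 : rep v' (n / d) = (rep v (n / d)).rotate ((i : ℕ) + (n - (i' : ℕ))) := by
      have h3 : ((rep v' (n / d)).rotate i'.1).rotate (n - (i' : ℕ))
          = rep v' (n / d) := by
        rw [List.rotate_rotate, show (i' : ℕ) + (n - (i' : ℕ)) = n by omega]
        exact rotate_eq_self_of_length
          (by rw [length_rep, hv1']; exact Nat.div_mul_cancel hdvd)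
      rw [← h3, ← hlist, List.rotate_rotate]
    set t := (i : ℕ) + (n - (i' : ℕ)) with ht
    have h4 : rep v' (n / d) = rep (v.rotate (t % d)) (n / d) := by
      rw [h2, rotate_rep_mod hv1 hdpos,
        rotate_rep (by rw [hv1]; exact (Nat.mod_lt _ hdpos).le)]
    have h5 : v' = v.rotate (t % d) := by
      have h6 := congrArg (List.take (v.rotate (t % d)).length) h4
      rw [take_rep _ hk] at h6
      rw [show (v.rotate (t % d)).length = v'.length by
        rw [List.length_rotate, hv1, hv1'], take_rep v' hk] at h6
      exact h6
    have hmod : t % d = 0 := by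
      by_contra hne
      have h0 : 0 < t % d := Nat.pos_of_ne_zero hne
      have hlt : t % d < v.length := by rw [hv1]; exact Nat.mod_lt _ hdpos
      exact not_lyndon_rotate hv.2 h0 hlt (h5 ▸ hv'.2)
    rw [hmod, List.rotate_zero] at h5
    subst h5
    -- i = i'
    have hii : (i : ℕ) = (i' : ℕ) := by
      refine rotate_injOn hrepne ?_ ?_ hlist
      · rw [hminrep]; exact hilt
      · rw [hminrep]; exact hilt'
    have : i = i' := Fin.ext hii
    subst this
    rfl
  · -- surjectivity
    rintro ⟨w, hwlen⟩
    have hwne : w ≠ [] := by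
      intro he; rw [he, List.length_nil] at hwlen; omega
    set d := minPer w with hdef
    have hdpos : 0 < d := minPer_pos hwne
    have hdvd : d ∣ n := hwlen ▸ minPer_dvd_length hwne
    have hdle : d ≤ n := Nat.le_of_dvd (by omega) hdvd
    have hdlw : d ≤ w.length := by omega
    set u := w.take d with hudef
    have hu : u.length = d := by rw [hudef, List.length_take]; omega
    have hune : u ≠ [] := by
      intro he; rw [he, List.length_nil] at hu; omega
    have hwrep : w = rep u (n / d) :=
      eq_rep_take hdpos n w hwlen hdvd (rotate_minPer hwne)
    have hk : 1 ≤ n / d := Nat.div_pos hdle hdpos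
    have huprim : minPer u = u.length := by
      rw [hu]
      refine le_antisymm (minPer_le hdpos (rotate_eq_self_of_length hu)) ?_
      by_contra hlt
      push_neg at hlt
      have he : minPer u ≤ d := le_of_lt hlt
      have hepos : 0 < minPer u := minPer_pos hune
      have hwper : w.rotate (minPer u) = w := by
        conv_lhs => rw [hwrep]
        rw [rotate_rep (by rw [hu]; exact he), rotate_minPer hune, ← hwrep]
      have := minPer_le hepos hwper
      omega
    obtain ⟨i₀, hi₀, hLyn⟩ := exists_lyndon_rotate hune huprim
    rw [hu] at hi₀
    have hvlen : (u.rotate i₀).length = d := by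
      rw [List.length_rotate, hu]
    have hvrep : rep (u.rotate i₀) (n / d) = w.rotate i₀ := by
      rw [← rotate_rep (by rw [hu]; exact hi₀.le), ← hwrep]
    set i := (n - i₀) % d with hidef
    have hi : i < d := Nat.mod_lt _ hdpos
    refine ⟨⟨⟨d, Nat.mem_divisors.2 ⟨hdvd, by omega⟩⟩,
      ⟨u.rotate i₀, hvlen, hLyn⟩, ⟨i, hi⟩⟩, Subtype.ext ?_⟩
    show (rep (u.rotate i₀) (n / d)).rotate i = w
    rw [← rotate_rep_mod hvlen hdpos _ (n - i₀), hvrep, List.rotate_rotate,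
      show i₀ + (n - i₀) = n by omega]
    exact rotate_eq_self_of_length hwlen

end LyndonAux

/-- `∑_{d ∣ n} d · L_q(d) = q ^ n`. -/
theorem sum_divisors_lyndonCount (q n : ℕ) (hq : 1 ≤ q) (hn : 1 ≤ n) :
    ∑ d ∈ n.divisors, d * lyndonCount q d = q ^ n := by
  classical
  have hfin : ∀ d : ℕ, Finite {w : List (Fin q) // w.length = d ∧ IsLyndon w} := by
    intro d
    have hinj : Function.Injective
        (fun x : {w : List (Fin q) // w.length = d ∧ IsLyndon w} =>
          (⟨x.1, x.2.1⟩ : List.Vector (Fin q) d)) := by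
      intro a b hab
      have h3 := congrArg Subtype.val hab
      exact Subtype.ext h3
    haveI hV : Finite (List.Vector (Fin q) d) := Finite.of_fintype _
    exact @Finite.of_injective _ _ hV _ hinj
  letI : ∀ d : ℕ, Fintype {w : List (Fin q) // w.length = d ∧ IsLyndon w} :=
    fun d => @Fintype.ofFinite _ (hfin d)
  have hcard := Nat.card_eq_of_bijective _ (LyndonAux.phi_bijective q n hn)
  have h1 : Nat.card {w : List (Fin q) // w.length = n} = q ^ n := by
    have e : {w : List (Fin q) // w.length = n} ≃ List.Vector (Fin q) n :=
      Equiv.refl _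
    rw [Nat.card_congr e, Nat.card_eq_fintype_card, card_vector, Fintype.card_fin]
  have hterm : ∀ d : ℕ,
      Fintype.card ({w : List (Fin q) // w.length = d ∧ IsLyndon w} × Fin d)
        = d * lyndonCount q d := by
    intro d
    rw [Fintype.card_prod, Fintype.card_fin, lyndonCount,
      Nat.card_eq_fintype_card, Nat.mul_comm]
  have h2 : Nat.card (Σ d : {x // x ∈ n.divisors},
      {w : List (Fin q) // w.length = d.1 ∧ IsLyndon w} × Fin d.1)
      = ∑ d ∈ n.divisors, d * lyndonCount q d := by
    rw [Nat.card_eq_fintype_card, Fintype.card_sigma]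
    rw [Finset.sum_congr rfl fun (i : {x // x ∈ n.divisors}) _ => hterm i.1]
    exact Finset.sum_coe_sort n.divisors (fun d => d * lyndonCount q d)
  rw [← h2, hcard, h1]
end

section
/- Let w be a Lyndon word of length at least 2 over a totally ordered alphabet, and suppose w = rs where r and s are both Lyndon words. Then (r,s) is the standard factorization of w (i.e., s has maximal length among such factorizations) if and only if s is the lexicographically smallest proper suffix of w. -/
section aux
variable {α : Type*} [LinearOrder α]

private lemma lp_append_lt_append_left_iff (l x y : List α) : l ++ x < l ++ y ↔ x < y := by
  constructor
  · intro h
    induction l with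
    | nil => exact h
    | cons a l ih =>
      exact ih (List.lex_cons_iff.1 h)
  · intro h
    exact List.Lex.append_left _ h l

private lemma lp_lt_of_prefix {x y : List α} (h : x <+: y) (hne : x ≠ y) : x < y := by
  obtain ⟨c, rfl⟩ := h
  have hc : c ≠ [] := by rintro rfl; simp at hne
  have : x ++ [] < x ++ c := by
    rw [lp_append_lt_append_left_iff]
    cases c with
    | nil => exact absurd rfl hc
    | cons a c => exact List.nil_lt_cons a c
  simpa using this

private lemma lp_lt_strong {x y : List α} (h : x < y) :
    x <+: y ∨ ∀ u v : List α, x ++ u < y ++ v := by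
  have h' : List.Lex (· < ·) x y := h
  induction h' with
  | nil => exact Or.inl (List.nil_prefix)
  | @cons a l₁ l₂ hlt ih =>
    rcases ih hlt with hp | hf
    · obtain ⟨c, rfl⟩ := hp
      exact Or.inl ⟨c, by simp⟩
    · exact Or.inr fun u v => List.Lex.cons (hf u v)
  | @rel a₁ l₁ a₂ l₂ hab =>
    exact Or.inr fun u v => List.Lex.rel hab

private lemma lp_lt_append {w t u : List α} (h : w < t ++ u) : w < t ∨ t <+: w := by
  rcases lt_trichotomy w t with h1 | rfl | h1
  · exact Or.inl h1
  · exact Or.inr List.prefix_rfl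
  · rcases lp_lt_strong h1 with hp | hf
    · exact Or.inr hp
    · exfalso
      have := hf u []
      rw [List.append_nil] at this
      exact lt_asymm h this

/-- A Lyndon word is smaller than all its proper nonempty suffixes. -/
private lemma lp_lyndon_lt_suffix {w t : List α} (hw : IsLyndon w) (ht : t <:+ w)
    (h0 : t ≠ []) (hne : t ≠ w) : w < t := by
  obtain ⟨u, rfl⟩ := ht
  have hu : u ≠ [] := by rintro rfl; simp at hne
  have hul : 0 < u.length := List.length_pos_iff.2 hu
  have htl : 0 < t.length := List.length_pos_iff.2 h0
  have h1 : u ++ t < t ++ u := by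
    have := hw.2 u.length hul (by simp; omega)
    rwa [List.rotate_append_length_eq] at this
  rcases lp_lt_append h1 with h2 | h2
  · exact h2
  · -- t is a prefix of w : w = t ++ v
    obtain ⟨v, hv⟩ := h2
    -- hv : t ++ v = u ++ t
    have hvne : v ≠ [] := by
      rintro rfl
      rw [List.append_nil] at hv
      exact hne hv
    have hlen : v.length = u.length := by
      have := congrArg List.length hv
      simp at this; omega
    have hvu : v < u := by
      rw [← hv] at h1
      exact (lp_append_lt_append_left_iff t v u).1 h1
    rcases lp_lt_strong hvu with hp | hf
    · exact absurd (hp.eq_of_length hlen) (ne_of_lt hvu)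
    · exfalso
      have h3 : u ++ t < v ++ t := by
        have h4 := hw.2 t.length htl (by simp; omega)
        rw [← hv, List.rotate_append_length_eq] at h4
        rwa [hv] at h4
      exact lt_asymm h3 (hf t t)

/-- Converse characterization: smaller than all proper nonempty suffixes implies Lyndon. -/
private lemma lp_lyndon_of_lt_suffix {w : List α} (hne : w ≠ [])
    (h : ∀ t, t <:+ w → t ≠ [] → t ≠ w → w < t) : IsLyndon w := by
  refine ⟨hne, fun i hi hiw => ?_⟩
  rw [List.rotate_eq_drop_append_take hiw.le]
  set t := w.drop i with htdef
  have ht : t <:+ w := List.drop_suffix i w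
  have ht0 : t ≠ [] := by
    intro he
    have := congrArg List.length he
    simp [htdef] at this
    omega
  have htw : t ≠ w := by
    intro he
    have := congrArg List.length he
    simp [htdef] at this
    omega
  have hwt := h t ht ht0 htw
  rcases lp_lt_strong hwt with hp | hf
  · exfalso
    have h1 := hp.length_le
    have h2 : t.length < w.length := by simp [htdef]; omega
    omega
  · have := hf [] (w.take i)
    simpa using this

private lemma lp_suffix_eq_drop {t w : List α} (h : t <:+ w) :
    t = w.drop (w.length - t.length) := by
  obtain ⟨u, rfl⟩ := h
  simp

private lemma lp_suffix_of_suffix {t₁ t₂ w : List α} (h₁ : t₁ <:+ w) (h₂ : t₂ <:+ w)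
    (hl : t₁.length ≤ t₂.length) : t₁ <:+ t₂ := by
  obtain ⟨u₂, rfl⟩ := h₂
  obtain ⟨u₁, hu₁⟩ := h₁
  have : t₁ = (u₂ ++ t₂).drop u₁.length := by rw [← hu₁]; simp
  have hlen : u₂.length ≤ u₁.length := by
    have := congrArg List.length hu₁
    simp at this; omega
  rw [this, List.drop_append]
  have : (u₂.drop u₁.length) = [] := by
    apply List.drop_eq_nil_of_le; omega
  rw [this, List.nil_append]
  exact List.drop_suffix _ _

/-- existence of the lexicographically smallest proper nonempty suffix -/
private lemma lp_exists_min_suffix {w : List α} (hlen : 2 ≤ w.length) :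
    ∃ m : List α, m <:+ w ∧ m ≠ [] ∧ m ≠ w ∧
      ∀ t, t <:+ w → t ≠ [] → t ≠ w → m ≤ t := by
  classical
  set S : Finset (List α) := (Finset.Ico 1 w.length).image (fun i => w.drop i) with hS
  have hSne : S.Nonempty :=
    ⟨w.drop 1, Finset.mem_image.2 ⟨1, Finset.mem_Ico.2 ⟨le_rfl, by omega⟩, rfl⟩⟩
  refine ⟨S.min' hSne, ?_, ?_, ?_, ?_⟩
  all_goals
    obtain ⟨i, hi, hdrop⟩ := Finset.mem_image.1 (S.min'_mem hSne)
    rw [Finset.mem_Ico] at hi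
  · rw [← hdrop]; exact List.drop_suffix i w
  · intro he
    rw [← hdrop] at he
    have := congrArg List.length he
    simp at this; omega
  · intro he
    rw [← hdrop] at he
    have := congrArg List.length he
    simp at this; omega
  · intro t ht ht0 htw
    have htl : 0 < t.length := List.length_pos_iff.2 ht0
    have htl2 : t.length < w.length := by
      obtain ⟨u, rfl⟩ := ht
      have hu : u ≠ [] := by rintro rfl; simp at htw
      have := List.length_pos_iff.2 hu
      simp; omega
    apply Finset.min'_le
    rw [hS, Finset.mem_image]
    exact ⟨w.length - t.length, Finset.mem_Ico.2 ⟨by omega, by omega⟩,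
      (lp_suffix_eq_drop ht).symm⟩

private lemma lp_min_suffix_lyndon {w m : List α} (hw : IsLyndon w) (hm : m <:+ w)
    (h0 : m ≠ []) (hne : m ≠ w) (hmin : ∀ t, t <:+ w → t ≠ [] → t ≠ w → m ≤ t) :
    IsLyndon m := by
  apply lp_lyndon_of_lt_suffix h0
  intro v hv hv0 hvm
  have hvw : v <:+ w := hv.trans hm
  have hml : m.length < w.length := lt_of_le_of_ne hm.length_le
    (fun he => hne (hm.eq_of_length he))
  have hvl : v.length < m.length := lt_of_le_of_ne hv.length_le
    (fun he => hvm (hv.eq_of_length he))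
  have hvwne : v ≠ w := by intro he; rw [he] at hvl; omega
  exact lt_of_le_of_ne (hmin v hvw hv0 hvwne) (fun he => hvm he.symm)

private lemma lp_left_factor_lyndon {w r₀ m : List α} (hw : IsLyndon w)
    (hsplit : w = r₀ ++ m) (hr0 : r₀ ≠ []) (hm0 : m ≠ [])
    (hmin : ∀ t, t <:+ w → t ≠ [] → t ≠ w → m ≤ t) : IsLyndon r₀ := by
  apply lp_lyndon_of_lt_suffix hr0
  intro b hb hb0 hbr
  obtain ⟨a, ha⟩ := hb
  have ha0 : a ≠ [] := by rintro rfl; simp at ha; exact hbr ha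
  have hwab : w = a ++ (b ++ m) := by rw [hsplit, ← ha, List.append_assoc]
  have hwlt : w < b ++ m := by
    apply lp_lyndon_lt_suffix hw ⟨a, hwab.symm⟩
    · simp [hb0]
    · intro he
      have h1 := congrArg List.length hwab
      have h2 := congrArg List.length he
      simp at h1 h2
      exact ha0 (List.length_eq_zero_iff.1 (by omega))
  by_contra hnot
  push_neg at hnot
  have hblt : b < r₀ := lt_of_le_of_ne hnot hbr
  rcases lp_lt_strong hblt with hp | hf
  · obtain ⟨c, hc⟩ := hp
    have hc0 : c ≠ [] := by rintro rfl; simp at hc; exact hbr hc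
    have hwbc : w = b ++ (c ++ m) := by rw [hsplit, ← hc, List.append_assoc]
    have h1 : c ++ m < m := by
      rw [hwbc] at hwlt
      exact (lp_append_lt_append_left_iff b (c ++ m) m).1 hwlt
    have h2 : m ≤ c ++ m := by
      apply hmin
      · exact ⟨b, hwbc.symm⟩
      · simp [hm0]
      · intro he
        have h1 := congrArg List.length hwbc
        have h2 := congrArg List.length he
        simp at h1 h2
        exact hb0 (List.length_eq_zero_iff.1 (by omega))
    exact absurd h1 (not_lt.2 h2)
  · have := hf m m
    rw [← hsplit] at this
    exact lt_asymm hwlt this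

end aux

/-- For a Lyndon word `w = r ++ s` of length at least 2 with `r`, `s` Lyndon,
`(r, s)` is the standard factorization (i.e. `s` has maximal length among all
such factorizations) if and only if `s` is the lexicographically smallest
proper suffix of `w`. -/
theorem standard_factorization_iff_least_proper_suffix
    {α : Type*} [LinearOrder α] (w r s : List α)
    (hw : IsLyndon w) (hlen : 2 ≤ w.length)
    (hrs : w = r ++ s) (hr : IsLyndon r) (hs : IsLyndon s) :
    (∀ r' s' : List α, w = r' ++ s' → IsLyndon r' → IsLyndon s' →
        s'.length ≤ s.length) ↔
      (∀ t : List α, t <:+ w → t ≠ [] → t ≠ w → s ≤ t) := by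
  have hssuf : s <:+ w := ⟨r, hrs.symm⟩
  have hrlen : 0 < r.length := List.length_pos_iff.2 hr.1
  have hslen : 0 < s.length := List.length_pos_iff.2 hs.1
  have hsw : s ≠ w := by
    intro he
    have h1 : w.length = r.length + s.length := by rw [hrs]; simp
    rw [← he] at h1
    omega
  constructor
  · intro Hmax t ht ht0 htw
    by_contra hnot
    push_neg at hnot
    obtain ⟨m, hm, hm0, hmw, hmin⟩ := lp_exists_min_suffix hlen
    have hms : m < s := lt_of_le_of_lt (hmin t ht ht0 htw) hnot
    have hlen2 : s.length < m.length := by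
      by_contra h
      push_neg at h
      have hsuf : m <:+ s := lp_suffix_of_suffix hm hssuf h
      rcases eq_or_ne m s with rfl | hne
      · exact lt_irrefl _ hms
      · have := lp_lyndon_lt_suffix hs hsuf hm0 hne
        exact lt_asymm hms this
    obtain ⟨r₀, hr₀⟩ := hm
    have hr₀0 : r₀ ≠ [] := by rintro rfl; simp at hr₀; exact hmw hr₀
    have hmly : IsLyndon m := lp_min_suffix_lyndon hw ⟨r₀, hr₀⟩ hm0 hmw hmin
    have hr₀ly : IsLyndon r₀ := lp_left_factor_lyndon hw hr₀.symm hr₀0 hm0 hmin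
    have := Hmax r₀ m hr₀.symm hr₀ly hmly
    omega
  · intro hmin r' s' hsplit hr' hs'
    by_contra h
    push_neg at h
    have hs'suf : s' <:+ w := ⟨r', hsplit.symm⟩
    have hsuf : s <:+ s' := lp_suffix_of_suffix hssuf hs'suf h.le
    have hne : s ≠ s' := by
      intro he
      rw [he] at h
      omega
    have h1 : s' < s := lp_lyndon_lt_suffix hs' hsuf hs.1 hne
    have hs'w : s' ≠ w := by
      intro he
      have h1 : w.length = r'.length + s'.length := by rw [hsplit]; simp
      rw [← he] at h1
      have := List.length_pos_iff.2 hr'.1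
      omega
    have h2 : s ≤ s' := hmin s' hs'suf hs'.1 hs'w
    exact absurd h1 (not_lt.2 h2)
end

section
/- The set of binary words with strictly decreasing Lyndon decomposition is in bijection with the set of finite sets of binary Lyndon words; under this bijection, the word length equals the sum of lengths of the Lyndon words in the set. Equivalently, as formal power series, ∑_{n≥0} Str_2(n) x^n = ∏_{l≥1} (1+x^l)^{L_2(l)}, where Str_2(n) counts binary words of length n with strictly decreasing Lyndon decomposition (Str_2(0)=1) and L_2(l) is the number of binary Lyndon words of length l. -/
/-- A word has a strictly decreasing Lyndon decomposition if it is the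
concatenation of a strictly decreasing (left to right) sequence of Lyndon words. -/
def HasStrictDecrLyndonDecomp {α : Type*} [LinearOrder α] (w : List α) : Prop :=
  ∃ L : List (List α),
    w = L.flatten ∧ (∀ l ∈ L, IsLyndon l) ∧ L.Chain' (fun a b => b < a)

namespace LyndonAux
variable {α : Type*} [LinearOrder α]

theorem le_append (l t : List α) : l ≤ l ++ t := by
  rcases t with _ | ⟨a, t⟩
  · simp
  · apply le_of_lt
    show List.Lex (· < ·) l (l ++ a :: t)
    induction l with
    | nil => exact List.Lex.nil
    | cons b l ih => exact List.Lex.cons ih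

theorem lt_of_append_lt_append_left {u p : List α} (s : List α) (h : s ++ u < s ++ p) : u < p := by
  induction s with
  | nil => exact h
  | cons a s ih =>
    cases h with
    | cons h' => exact ih h'
    | rel h' => exact absurd h' (lt_irrefl a)

theorem lt_of_lt_append {x y : List α} (t : List α) (h : x < y ++ t) (hnp : ¬ y <+: x) : x < y := by
  induction x generalizing y with
  | nil =>
    cases y with
    | nil => exact absurd List.nil_prefix hnp
    | cons b y' => exact List.Lex.nil
  | cons a x' ih =>
    cases y with
    | nil => exact absurd List.nil_prefix hnp
    | cons b y' =>
      cases h with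
      | cons h' =>
        exact List.Lex.cons (ih (y := y') h' (fun hp => hnp (List.cons_prefix_cons.mpr ⟨rfl, hp⟩)))
      | rel h' => exact List.Lex.rel h'

theorem append_lt_append {x y : List α} (s t : List α) (h : x < y) (hnp : ¬ x <+: y) :
    x ++ s < y ++ t := by
  induction x generalizing y with
  | nil => exact absurd List.nil_prefix hnp
  | cons a x' ih =>
    cases y with
    | nil => cases h
    | cons b y' =>
      cases h with
      | cons h' =>
        exact List.Lex.cons (ih (y := y') h' (fun hp => hnp (List.cons_prefix_cons.mpr ⟨rfl, hp⟩)))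
      | rel h' => exact List.Lex.rel h'

theorem rotate_of_append {p s : List α} : (p ++ s).rotate p.length = s ++ p := by
  rw [List.rotate_eq_drop_append_take (by simp)]
  simp

theorem lyndon_lt_suffix {w s : List α} (hw : IsLyndon w) (hs : s <:+ w) (hne : s ≠ [])
    (hsw : s ≠ w) : w < s := by
  obtain ⟨p, hp⟩ := hs
  have hpne : p ≠ [] := by rintro rfl; exact hsw hp
  have hplen : 0 < p.length := List.length_pos_iff.mpr hpne
  have hslen : 0 < s.length := List.length_pos_iff.mpr hne
  have hlt : w < s ++ p := by
    have h2 : p.length < w.length := by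
      rw [← hp, List.length_append]; omega
    have := hw.2 p.length hplen h2
    rwa [← hp, rotate_of_append, hp] at this
  by_cases hpre : s <+: w
  · exfalso
    obtain ⟨u, hu⟩ := hpre
    have hlen : u.length = p.length := by
      have h1 := congrArg List.length hp
      have h2 := congrArg List.length hu
      simp [List.length_append] at h1 h2
      omega
    have hlt2 : w < u ++ s := by
      have h2 : s.length < w.length := by
        rw [← hp, List.length_append]; omega
      have := hw.2 s.length hslen h2
      rwa [← hu, rotate_of_append, hu] at this
    have hup : u < p := by
      apply lt_of_append_lt_append_left s
      rw [hu]; exact hlt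
    have hups : u ++ s < p ++ s := by
      apply append_lt_append
      · exact hup
      · intro hpre'
        exact absurd (hpre'.eq_of_length hlen) (ne_of_lt hup)
    rw [hp] at hups
    exact absurd hlt2 (asymm hups)
  · exact lt_of_lt_append p hlt hpre

theorem min_suffix : ∀ (K : List (List α)) (m : List α),
    (∀ l ∈ K ++ [m], IsLyndon l) → (K ++ [m]).Pairwise (fun a b => b < a) →
    ∀ s, s <:+ (K ++ [m]).flatten → s ≠ [] → m ≤ s := by
  intro K
  induction K with
  | nil =>
    intro m hlyn _ s hs hne
    simp only [List.nil_append, List.flatten, List.append_nil, List.append_eq] at hs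
    rcases eq_or_ne s m with rfl | h
    · exact le_refl _
    · exact le_of_lt (lyndon_lt_suffix (hlyn m (by simp)) hs hne h)
  | cons a K ih =>
    intro m hlyn hpw s hs hne
    have hmem : m ∈ (a :: K) ++ [m] := by simp
    have hmne : m ≠ [] := (hlyn m hmem).1
    rw [show ((a :: K) ++ [m]).flatten = a ++ (K ++ [m]).flatten by simp] at hs
    have hpw' := (List.pairwise_cons.mp hpw)
    have ihm : ∀ s, s <:+ (K ++ [m]).flatten → s ≠ [] → m ≤ s :=
      ih m (fun l hl => hlyn l (List.mem_cons_of_mem a hl)) hpw'.2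
    have hma : m < a := hpw'.1 m (by simp)
    have hfne : (K ++ [m]).flatten ≠ [] := by
      intro h
      have : m <:+ (K ++ [m]).flatten := ⟨K.flatten, by simp⟩
      rw [h] at this
      exact hmne (List.suffix_nil.mp this)
    obtain ⟨p, hp⟩ := hs
    rcases List.append_eq_append_iff.mp hp with ⟨a', ha1, ha2⟩ | ⟨c, hc1, hc2⟩
    · rcases eq_or_ne a' [] with rfl | ha'ne
      · simp only [List.nil_append] at ha2
        exact ihm s (ha2 ▸ List.suffix_refl _) hne
      · have hsuf : a' <:+ a := ⟨p, ha1.symm⟩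
        rcases eq_or_ne a' a with rfl | hne'
        · calc m ≤ a' := le_of_lt hma
            _ ≤ a' ++ (K ++ [m]).flatten := le_append _ _
            _ = s := ha2.symm
        · have haa' : a < a' := lyndon_lt_suffix (hlyn a (by simp)) hsuf ha'ne hne'
          calc m ≤ a' := le_of_lt (lt_trans hma haa')
            _ ≤ a' ++ (K ++ [m]).flatten := le_append _ _
            _ = s := ha2.symm
    · exact ihm s ⟨c, hc2.symm⟩ hne

theorem uniq (L₁ : List (List α)) : ∀ (L₂ : List (List α)),
    (∀ l ∈ L₁, IsLyndon l) → L₁.Pairwise (fun a b => b < a) →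
    (∀ l ∈ L₂, IsLyndon l) → L₂.Pairwise (fun a b => b < a) →
    L₁.flatten = L₂.flatten → L₁ = L₂ := by
  induction L₁ using List.reverseRecOn with
  | nil =>
    intro L₂ _ _ hlyn₂ _ hf
    cases L₂ with
    | nil => rfl
    | cons b T =>
      exfalso
      simp only [List.flatten_nil, List.flatten_cons] at hf
      have := List.append_eq_nil_iff.mp hf.symm
      exact (hlyn₂ b (by simp)).1 this.1
  | append_singleton K m ihK =>
    intro L₂ hlyn₁ hpw₁ hlyn₂ hpw₂ hf
    rcases List.eq_nil_or_concat L₂ with rfl | ⟨K₂, m₂, rfl⟩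
    · exfalso
      simp only [List.flatten_append, List.flatten_nil] at hf
      simp at hf
      exact (hlyn₁ m (by simp)).1 hf.2
    · rw [List.concat_eq_append] at *
      have hm₁ : m <:+ (K ++ [m]).flatten := ⟨K.flatten, by simp⟩
      have hm₂ : m₂ <:+ (K₂ ++ [m₂]).flatten := ⟨K₂.flatten, by simp⟩
      have hle₁ : m₂ ≤ m := min_suffix K₂ m₂ hlyn₂ hpw₂ m (hf ▸ hm₁) (hlyn₁ m (by simp)).1
      have hle₂ : m ≤ m₂ := min_suffix K m hlyn₁ hpw₁ m₂ (hf ▸ hm₂) (hlyn₂ m₂ (by simp)).1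
      have hmm : m = m₂ := le_antisymm hle₂ hle₁
      subst hmm
      have hK : K.flatten = K₂.flatten := by
        have : K.flatten ++ m = K₂.flatten ++ m := by
          simpa using hf
        exact List.append_cancel_right this
      have : K = K₂ := ihK K₂
        (fun l hl => hlyn₁ l (by simp [hl]))
        (hpw₁.sublist (List.sublist_append_left K [m]))
        (fun l hl => hlyn₂ l (by simp [hl]))
        (hpw₂.sublist (List.sublist_append_left K₂ [m]))
        hK
      rw [this]

end LyndonAux


/-- The set of binary words with strictly decreasing Lyndon decomposition is in
bijection with the set of finite sets of binary Lyndon words; the bijection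
sends a word of length `n` to a set of Lyndon words whose lengths sum to `n`.
(Equivalently, `∑_n Str₂(n) xⁿ = ∏_{l ≥ 1} (1 + xˡ)^{L₂(l)}` as formal power
series.) -/
theorem strictDecr_equiv_finsets_of_lyndon :
    ∃ e : {w : List Bool // HasStrictDecrLyndonDecomp w} ≃
          {S : Finset (List Bool) // ∀ l ∈ S, IsLyndon l},
      ∀ w : {w : List Bool // HasStrictDecrLyndonDecomp w},
        (w : List Bool).length = ∑ l ∈ (e w : Finset (List Bool)), l.length := by
  classical
  haveI : IsTrans (List Bool) (fun a b => b < a) := ⟨fun a b c h1 h2 => lt_trans h2 h1⟩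
  have hsortpw : ∀ S : Finset (List Bool),
      (S.sort (· ≥ ·)).Pairwise (fun a b => b < a) := by
    intro S
    have h1 : (S.sort (· ≥ ·)).Pairwise (· ≥ ·) := Finset.pairwise_sort _ _
    have h2 : (S.sort (· ≥ ·)).Pairwise (· ≠ ·) := Finset.sort_nodup _ _
    exact (h1.and h2).imp (fun h => lt_of_le_of_ne h.1 h.2.symm)
  set g : {S : Finset (List Bool) // ∀ l ∈ S, IsLyndon l} →
      {w : List Bool // HasStrictDecrLyndonDecomp w} :=
    fun S => ⟨(S.1.sort (· ≥ ·)).flatten, S.1.sort (· ≥ ·), rfl,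
      fun l hl => S.2 l ((Finset.mem_sort _).mp hl),
      (hsortpw S.1).isChain⟩ with hg
  have hinj : Function.Injective g := by
    intro S₁ S₂ h
    have hf : (S₁.1.sort (· ≥ ·)).flatten = (S₂.1.sort (· ≥ ·)).flatten :=
      congrArg Subtype.val h
    have hs : S₁.1.sort (· ≥ ·) = S₂.1.sort (· ≥ ·) :=
      LyndonAux.uniq _ _ (fun l hl => S₁.2 l ((Finset.mem_sort _).mp hl)) (hsortpw S₁.1)
        (fun l hl => S₂.2 l ((Finset.mem_sort _).mp hl)) (hsortpw S₂.1) hf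
    apply Subtype.ext
    apply Finset.ext
    intro a
    rw [← Finset.mem_sort (α := List Bool) (· ≥ ·), hs, Finset.mem_sort (α := List Bool) (· ≥ ·)]
  have hsurj : Function.Surjective g := by
    rintro ⟨w, L, rfl, hlyn, hch⟩
    have hpw : L.Pairwise (fun a b => b < a) := List.isChain_iff_pairwise.mp hch
    have hnd : L.Nodup := hpw.imp (fun h => ne_of_gt h)
    refine ⟨⟨L.toFinset, fun l hl => hlyn l (List.mem_toFinset.mp hl)⟩, ?_⟩
    apply Subtype.ext
    show (L.toFinset.sort (· ≥ ·)).flatten = L.flatten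
    congr 1
    apply (fun hp h1 h2 => List.Perm.eq_of_pairwise' (r := fun a b : List Bool => a ≥ b) h1 h2 hp)
      ((Finset.sort_perm_toList _ _).trans (List.toFinset_toList hnd))
      (Finset.pairwise_sort _ _)
      (hpw.imp (fun h => le_of_lt h))
  refine ⟨(Equiv.ofBijective g ⟨hinj, hsurj⟩).symm, ?_⟩
  intro w
  have hgw : g ((Equiv.ofBijective g ⟨hinj, hsurj⟩).symm w) = w :=
    Equiv.ofBijective_apply_symm_apply g ⟨hinj, hsurj⟩ w
  set S := ((Equiv.ofBijective g ⟨hinj, hsurj⟩).symm w) with hS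
  have hw : (w : List Bool) = (S.1.sort (· ≥ ·)).flatten :=
    (congrArg Subtype.val hgw).symm
  rw [hw, List.length_flatten, ← Finset.sum_map_toList,
    ← List.Perm.sum_eq ((Finset.sort_perm_toList (α := List Bool) S.1 (· ≥ ·)).map List.length)]
end

section
/- Let V = p·2^r with p odd, p ≥ 1, r ≥ 1, and let A_V be the V×V binary-graph adjacency matrix defined by (A_V)_{i,j} = δ_{2i,j} + δ_{2i+1,j} for 0 ≤ i < V/2 and (A_V)_{i,j} = δ_{2i−V,j} + δ_{2i+1−V,j} for V/2 ≤ i < V (indices 0 ≤ j < V). Then det(A_V − λI_V) = (−λ)^{V/2} det(A_{V/2} − λI_{V/2}). -/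
open Matrix

/-- Adjacency matrix of the binary graph on `V` vertices: vertex `i` has
outgoing bonds to `2i mod V` and `2i+1 mod V`.  For `0 ≤ i < V/2` this gives
`δ_{2i,j} + δ_{2i+1,j}`, and for `V/2 ≤ i < V` it gives
`δ_{2i−V,j} + δ_{2i+1−V,j}`. -/
def binAdj (V : ℕ) : Matrix (Fin V) (Fin V) ℂ := fun i j =>
  (if (2 * i.val) % V = j.val then 1 else 0) +
    (if (2 * i.val + 1) % V = j.val then 1 else 0)

namespace BinAdjAux

/-- Left half of the top `W × (2W)` block of `binAdj (W+W)`. -/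
def B1 (W : ℕ) : Matrix (Fin W) (Fin W) ℂ := fun i j =>
  (if 2 * i.val = j.val then 1 else 0) + (if 2 * i.val + 1 = j.val then 1 else 0)

/-- Right half of the top `W × (2W)` block of `binAdj (W+W)`. -/
def B2 (W : ℕ) : Matrix (Fin W) (Fin W) ℂ := fun i j =>
  (if 2 * i.val = W + j.val then 1 else 0) + (if 2 * i.val + 1 = W + j.val then 1 else 0)

lemma if_mod (W a j : ℕ) (hj : j < W) (ha : a < W + W) :
    (if a % W = j then (1 : ℂ) else 0)
      = (if a = j then 1 else 0) + (if a = W + j then 1 else 0) := by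
  rcases lt_or_ge a W with h | h
  · rw [Nat.mod_eq_of_lt h]
    have h2 : a ≠ W + j := by omega
    simp [h2]
  · have hm : a % W = a - W := by
      rw [Nat.mod_eq_sub_mod h, Nat.mod_eq_of_lt (by omega)]
    rw [hm]
    have h2 : a ≠ j := by omega
    have h3 : a - W = j ↔ a = W + j := by omega
    simp [h2, h3]

lemma sum_B (W : ℕ) : B1 W + B2 W = binAdj W := by
  ext i j
  have hi := i.isLt
  have hj := j.isLt
  simp only [B1, B2, binAdj, Matrix.add_apply]
  rw [if_mod W (2 * i.val) j.val hj (by omega),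
    if_mod W (2 * i.val + 1) j.val hj (by omega)]
  ring

lemma submatrix_eq (W : ℕ) (lam : ℂ) :
    (binAdj (W + W) - lam • 1).submatrix finSumFinEquiv finSumFinEquiv
      = fromBlocks (B1 W - lam • 1) (B2 W) (B1 W) (B2 W - lam • 1) := by
  have m1 : ∀ i : Fin W, (2 * i.val) % (W + W) = 2 * i.val := fun i =>
    Nat.mod_eq_of_lt (by omega)
  have m2 : ∀ i : Fin W, (2 * i.val + 1) % (W + W) = 2 * i.val + 1 := fun i =>
    Nat.mod_eq_of_lt (by omega)
  have m3 : ∀ i : Fin W, (2 * (W + i.val)) % (W + W) = 2 * i.val := by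
    intro i
    have h : 2 * (W + i.val) = 2 * i.val + (W + W) := by ring
    rw [h, Nat.add_mod_right]; exact m1 i
  have m4 : ∀ i : Fin W, (2 * (W + i.val) + 1) % (W + W) = 2 * i.val + 1 := by
    intro i
    have h : 2 * (W + i.val) + 1 = (2 * i.val + 1) + (W + W) := by ring
    rw [h, Nat.add_mod_right]; exact m2 i
  ext i j
  rcases i with i | i <;> rcases j with j | j <;>
    simp only [Matrix.submatrix_apply, Matrix.sub_apply, Matrix.smul_apply,
      Matrix.one_apply, finSumFinEquiv_apply_left, finSumFinEquiv_apply_right,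
      fromBlocks_apply₁₁, fromBlocks_apply₁₂, fromBlocks_apply₂₁, fromBlocks_apply₂₂,
      binAdj, B1, B2, Fin.ext_iff, Fin.coe_castAdd, Fin.coe_natAdd, smul_eq_mul,
      m1, m2, m3, m4]
  all_goals
    have hi := i.isLt
    have hj := j.isLt
    split_ifs <;> first | ring1 | (exfalso; omega)

lemma key (W : ℕ) (lam : ℂ) :
    (binAdj (W + W) - lam • 1).det = (-lam) ^ W * (binAdj W - lam • 1).det := by
  rw [← Matrix.det_submatrix_equiv_self finSumFinEquiv, submatrix_eq W lam]
  set N := fromBlocks (B1 W - lam • 1) (B2 W) (B1 W) (B2 W - lam • 1) with hN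
  set o : Matrix (Fin W) (Fin W) ℂ := 1 with ho
  set z : Matrix (Fin W) (Fin W) ℂ := 0 with hz
  have hL : (fromBlocks o (-o) z o).det = 1 := by
    rw [ho, hz, Matrix.det_fromBlocks_zero₂₁]; simp
  have hR : (fromBlocks o o z o).det = 1 := by
    rw [ho, hz, Matrix.det_fromBlocks_zero₂₁]; simp
  have hmul : fromBlocks o (-o) z o * N * fromBlocks o o z o
      = fromBlocks ((-lam) • o) z (B1 W) (B1 W + B2 W - lam • o) := by
    rw [hN, ho, hz, Matrix.fromBlocks_multiply, Matrix.fromBlocks_multiply,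
      Matrix.fromBlocks_inj]
    refine ⟨?_, ?_, ?_, ?_⟩ <;>
      simp only [Matrix.one_mul, Matrix.mul_one, Matrix.neg_mul, Matrix.zero_mul,
        Matrix.mul_zero, add_zero, zero_add] <;>
      module
  have hdet : N.det = (fromBlocks ((-lam) • o) z (B1 W)
      (B1 W + B2 W - lam • o)).det := by
    rw [← hmul, Matrix.det_mul, Matrix.det_mul, hL, hR, one_mul, mul_one]
  rw [hdet, ho, hz, Matrix.det_fromBlocks_zero₁₂, Matrix.det_smul, Matrix.det_one,
    Fintype.card_fin, mul_one, sum_B]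

end BinAdjAux

/-- For `V = p·2^r` with `p` odd and `r ≥ 1`,
`det(A_V − λ I_V) = (−λ)^{V/2} · det(A_{V/2} − λ I_{V/2})`. -/
theorem det_binAdj_sub_smul (p r : ℕ) (hp : Odd p) (hp1 : 1 ≤ p) (hr : 1 ≤ r)
    (lam : ℂ) :
    (binAdj (p * 2 ^ r) - lam • (1 : Matrix (Fin (p * 2 ^ r)) (Fin (p * 2 ^ r)) ℂ)).det
      = (-lam) ^ (p * 2 ^ (r - 1)) *
        (binAdj (p * 2 ^ (r - 1)) -
          lam • (1 : Matrix (Fin (p * 2 ^ (r - 1))) (Fin (p * 2 ^ (r - 1))) ℂ)).det := by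
  have h : p * 2 ^ r = p * 2 ^ (r - 1) + p * 2 ^ (r - 1) := by
    have h2 : 2 ^ r = 2 ^ (r - 1) * 2 := by
      rw [← pow_succ]
      congr 1
      omega
    rw [h2]; ring
  rw [h]
  exact BinAdjAux.key _ lam
end

section
/- Let V = p·2^r with p odd and r ≥ 1, and let A_V be the binary-graph adjacency matrix (vertex i connects to 2i mod V and 2i+1 mod V). Then the nonzero eigenvalues of A_V (with multiplicity) coincide with those of A_p, and zero is an eigenvalue of A_V with multiplicity at least V − p. -/
open Matrix Polynomial

lemma charpoly_conj_aux {n : Type*} [DecidableEq n] [Fintype n]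
    (M S T : Matrix n n ℂ) (h : T * S = 1) :
    (T * M * S).charpoly = M.charpoly := by
  have hTS : (T.map C) * (S.map C) = 1 := by
    rw [← Matrix.map_mul, h, Matrix.map_one C C_0 C_1]
  unfold Matrix.charpoly
  have key : charmatrix (T * M * S) = T.map C * charmatrix M * S.map C := by
    unfold charmatrix
    simp only [RingHom.mapMatrix_apply]
    rw [Matrix.map_mul, Matrix.map_mul, Matrix.mul_sub, Matrix.sub_mul]
    congr 1
    rw [← (Matrix.scalar_commute (X : ℂ[X]) (fun r' => Commute.all _ _) (T.map C)).eq,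
      Matrix.mul_assoc, hTS, Matrix.mul_one]
  rw [key, det_mul, det_mul]
  have hd : (T.map C).det * (S.map C).det = 1 := by
    rw [← det_mul, hTS, det_one]
  calc (T.map C).det * (charmatrix M).det * (S.map C).det
      = (T.map C).det * (S.map C).det * (charmatrix M).det := by ring
    _ = (charmatrix M).det := by rw [hd, one_mul]

lemma charpoly_zero_aux (m : ℕ) : (0 : Matrix (Fin m) (Fin m) ℂ).charpoly = X ^ m := by
  unfold Matrix.charpoly charmatrix
  simp [Matrix.scalar, Matrix.det_diagonal]

lemma pairIf (m x j : ℕ) (hm : 0 < m) (hj : j < m) :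
    ((if x % (2*m) = j then (1:ℂ) else 0) + (if x % (2*m) = m + j then 1 else 0))
      = (if x % m = j then 1 else 0) := by
  have h1 : x % (2*m) % m = x % m := Nat.mod_mod_of_dvd _ ⟨2, by ring⟩
  have h2 : x % (2*m) < 2*m := Nat.mod_lt _ (by omega)
  have hb : x % m < m := Nat.mod_lt _ hm
  have hab : x % (2*m) = x % m ∨ x % (2*m) = m + x % m := by
    have h3 := Nat.div_add_mod (x % (2*m)) m
    rw [h1] at h3
    have h4 : x % (2*m) / m < 2 := by
      rw [Nat.div_lt_iff_lt_mul hm]; omega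
    have h5 : x % (2*m) / m = 0 ∨ x % (2*m) / m = 1 := by generalize hq : x % (2*m) / m = q at h4 ⊢; omega
    rcases h5 with h5 | h5 <;> rw [h5] at h3 <;> simp only [Nat.mul_zero, Nat.mul_one] at h3
    · left; omega
    · right; omega
  by_cases h : x % m = j
  · have hcases : (x % (2*m) = j ∧ x % (2*m) ≠ m + j) ∨ (x % (2*m) ≠ j ∧ x % (2*m) = m + j) := by
      omega
    rcases hcases with ⟨h3, h4⟩ | ⟨h3, h4⟩ <;> simp [h, h3, h4, hm.ne']
  · have h3 : x % (2*m) ≠ j ∧ x % (2*m) ≠ m + j := by omega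
    simp [h, h3.1, h3.2]

lemma keyStep (m : ℕ) :
    (binAdj (2 * m)).charpoly = X ^ m * (binAdj m).charpoly := by
  classical
  set e : Fin m ⊕ Fin m ≃ Fin (2 * m) :=
    finSumFinEquiv.trans (finCongr (two_mul m).symm) with he
  have heL : ∀ i : Fin m, (e (Sum.inl i)).val = i.val := by
    intro i; simp [he, finSumFinEquiv]
  have heR : ∀ i : Fin m, (e (Sum.inr i)).val = m + i.val := by
    intro i
    simp only [he, Equiv.trans_apply, finCongr_apply, Fin.coe_cast]
    simp [finSumFinEquiv]
    omega
  set N : Matrix (Fin m ⊕ Fin m) (Fin m ⊕ Fin m) ℂ := (binAdj (2*m)).submatrix e e with hN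
  set B₁ : Matrix (Fin m) (Fin m) ℂ := of fun i j => N (Sum.inl i) (Sum.inl j) with hB₁
  set B₂ : Matrix (Fin m) (Fin m) ℂ := of fun i j => N (Sum.inl i) (Sum.inr j) with hB₂
  have hrow : ∀ (i : Fin m) (k : Fin m ⊕ Fin m), N (Sum.inr i) k = N (Sum.inl i) k := by
    intro i k
    have h1 : 2 * (m + i.val) = 2 * i.val + 2 * m := by ring
    have h2 : 2 * (m + i.val) + 1 = (2 * i.val + 1) + 2 * m := by ring
    simp only [hN, submatrix_apply, binAdj, heL, heR]
    rw [h2, h1, Nat.add_mod_right, Nat.add_mod_right]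
  have hNblocks : N = fromBlocks B₁ B₂ B₁ B₂ := by
    ext (i | i) (j | j) <;> simp [fromBlocks, hB₁, hB₂, hrow]
  have hsum : B₁ + B₂ = binAdj m := by
    ext i j
    have hm : 0 < m := i.pos
    simp only [hB₁, hB₂, Matrix.add_apply, of_apply, hN, submatrix_apply, binAdj, heL, heR]
    rw [add_add_add_comm]
    rw [pairIf m (2*i.val) j.val hm j.isLt, pairIf m (2*i.val+1) j.val hm j.isLt]
  have hre : N.charpoly = (binAdj (2*m)).charpoly := by
    have h : N = reindex e.symm e.symm (binAdj (2*m)) := by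
      ext i j; simp [hN]
    rw [h, Matrix.charpoly_reindex]
  set S : Matrix (Fin m ⊕ Fin m) (Fin m ⊕ Fin m) ℂ := fromBlocks 1 0 1 1 with hS
  set T : Matrix (Fin m ⊕ Fin m) (Fin m ⊕ Fin m) ℂ := fromBlocks 1 0 (-1) 1 with hT
  have hTS : T * S = 1 := by
    rw [hT, hS, fromBlocks_multiply]
    simp [← fromBlocks_one]
  have hTNS : T * N * S = fromBlocks (B₁ + B₂) B₂ 0 0 := by
    rw [hNblocks, hT, hS, fromBlocks_multiply, fromBlocks_multiply]
    simp
  have := charpoly_conj_aux N S T hTS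
  rw [hTNS, hsum] at this
  rw [← hre, ← this, Matrix.charpoly_fromBlocks_zero₂₁, charpoly_zero_aux, mul_comm]

lemma mainFactor (p r : ℕ) (hp : 0 < p) :
    (binAdj (p * 2 ^ r)).charpoly = X ^ (p * 2 ^ r - p) * (binAdj p).charpoly := by
  induction r with
  | zero =>
    rw [show p * 2 ^ 0 = p from by ring]
    simp
  | succ r ih =>
    have harith : p * 2 ^ (r + 1) = 2 * (p * 2 ^ r) := by ring
    have hle : p ≤ p * 2 ^ r := Nat.le_mul_of_pos_right p (by positivity)
    have h := keyStep (p * 2 ^ r)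
    rw [← harith] at h
    rw [h, ih, ← mul_assoc, ← pow_add]
    congr 2
    omega

/-- For `V = p·2^r` with `p` odd and `r ≥ 1`: the nonzero eigenvalues of `A_V`
(with multiplicity) coincide with those of `A_p`, and zero is an eigenvalue of
`A_V` with multiplicity at least `V − p`. -/
theorem binAdj_nonzero_eigenvalues (p r : ℕ) (hp : Odd p) (hr : 1 ≤ r) :
    (∀ lam : ℂ, lam ≠ 0 →
        ((binAdj (p * 2 ^ r)).charpoly).rootMultiplicity lam
          = ((binAdj p).charpoly).rootMultiplicity lam) ∧
      p * 2 ^ r - p ≤ ((binAdj (p * 2 ^ r)).charpoly).rootMultiplicity 0 := by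
  have hp0 : 0 < p := hp.pos
  have hfac := mainFactor p r hp0
  have hq : (binAdj p).charpoly ≠ 0 := (Matrix.charpoly_monic _).ne_zero
  have hXk : (X : ℂ[X]) ^ (p * 2 ^ r - p) ≠ 0 := pow_ne_zero _ X_ne_zero
  constructor
  · intro lam hlam
    rw [hfac, Polynomial.rootMultiplicity_mul (mul_ne_zero hXk hq)]
    have hnr : ¬ ((X : ℂ[X]) ^ (p * 2 ^ r - p)).IsRoot lam := by
      simp [Polynomial.IsRoot, hlam, pow_ne_zero]
    rw [Polynomial.rootMultiplicity_eq_zero hnr, zero_add]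
  · rw [Polynomial.le_rootMultiplicity_iff (hfac ▸ mul_ne_zero hXk hq)]
    rw [hfac]
    simp only [map_zero, sub_zero]
    exact Dvd.intro _ rfl
end

section
/- Let p be odd, ξ = e^{2πi/p}, F the p×p Discrete Fourier Transform matrix, and A_p the p×p matrix with (A_p)_{i,j} equal to the number of μ ∈ {0,1} with 2i+μ ≡ j (mod p). Then the conjugated matrix Ã_p = F^{-1} A_p F has entries (Ã_p)_{i,j} = 1 + ξ^j if i ≡ 2j (mod p) and 0 otherwise; in particular Ã_p is a generalized permutation matrix (exactly one nonzero entry in each row and each column). -/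
open Matrix Complex Finset

/-- The folded adjacency matrix `A_p`: `(A_p)_{i,j} = |{μ ∈ {0,1} : 2i+μ ≡ j (mod p)}|`. -/
def foldAdj (p : ℕ) : Matrix (Fin p) (Fin p) ℂ := fun i j =>
  (if (2 * i.val) % p = j.val then 1 else 0) +
    (if (2 * i.val + 1) % p = j.val then 1 else 0)

/-- The `p × p` Discrete Fourier Transform matrix,
`F_{j,k} = p^{-1/2} ξ^{jk}` with `ξ = e^{2πi/p}`. -/
noncomputable def dft (p : ℕ) : Matrix (Fin p) (Fin p) ℂ := fun j k =>
  ((Real.sqrt p : ℂ))⁻¹ * Complex.exp (2 * Real.pi * Complex.I / p) ^ (j.val * k.val)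

noncomputable def dftInv (p : ℕ) : Matrix (Fin p) (Fin p) ℂ := fun j k =>
  ((Real.sqrt p : ℂ))⁻¹ * (Complex.exp (2 * Real.pi * Complex.I / p) ^ (j.val * k.val))⁻¹

lemma geom_fin {p : ℕ} (w : ℂ) (hw : w ^ p = 1) :
    ∑ k : Fin p, w ^ (k : ℕ) = if w = 1 then (p : ℂ) else 0 := by
  rw [Fin.sum_univ_eq_sum_range]
  split_ifs with h
  · simp [h]
  · rw [geom_sum_eq h, hw, sub_self, zero_div]

lemma sqrt_mul_self' {p : ℕ} (hp0 : p ≠ 0) :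
    ((Real.sqrt p : ℂ))⁻¹ * ((Real.sqrt p : ℂ))⁻¹ = (p : ℂ)⁻¹ := by
  rw [← mul_inv, ← Complex.ofReal_mul, Real.mul_self_sqrt (Nat.cast_nonneg p),
    Complex.ofReal_natCast]

lemma leftInv {p : ℕ} (hp0 : p ≠ 0) : dftInv p * dft p = 1 := by
  have hζ : IsPrimitiveRoot (Complex.exp (2 * Real.pi * Complex.I / p)) p :=
    Complex.isPrimitiveRoot_exp p hp0
  set ζ := Complex.exp (2 * Real.pi * Complex.I / p) with hζdef
  have hζ0 : ζ ≠ 0 := Complex.exp_ne_zero _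
  ext i j
  rw [Matrix.mul_apply]
  have key : ∀ k : Fin p, dftInv p i k * dft p k j
      = (p:ℂ)⁻¹ * (ζ ^ (j:ℕ) * (ζ ^ (i:ℕ))⁻¹) ^ (k:ℕ) := by
    intro k
    simp only [dftInv, dft, mul_pow, inv_pow, ← pow_mul]
    rw [mul_comm (k.val) (j.val), ← sqrt_mul_self' hp0]
    ring
  rw [Finset.sum_congr rfl (fun k _ => key k), ← Finset.mul_sum]
  have hw : (ζ ^ (j:ℕ) * (ζ ^ (i:ℕ))⁻¹) ^ p = 1 := by
    rw [mul_pow, ← pow_mul, inv_pow, ← pow_mul, mul_comm (j:ℕ) p, mul_comm (i:ℕ) p,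
      pow_mul, pow_mul, hζ.pow_eq_one]
    simp
  rw [geom_fin _ hw]
  have hiff : (ζ ^ (j:ℕ) * (ζ ^ (i:ℕ))⁻¹ = 1) ↔ i = j := by
    rw [mul_inv_eq_one₀ (pow_ne_zero _ hζ0)]
    constructor
    · intro h; exact (Fin.ext (hζ.pow_inj j.isLt i.isLt h)).symm
    · rintro rfl; rfl
  rw [Matrix.one_apply]
  split_ifs with h1 h2 h2
  · rw [mul_comm, mul_inv_cancel₀ (Nat.cast_ne_zero.mpr hp0)]
  · exact absurd (hiff.mp h1) h2
  · exact absurd (hiff.mpr h2) h1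
  · rw [mul_zero]

lemma entry {p : ℕ} (hp0 : p ≠ 0) (i j : Fin p) :
    (dftInv p * foldAdj p * dft p) i j =
      if (2 * j.val) % p = i.val then
        1 + Complex.exp (2 * Real.pi * Complex.I / p) ^ j.val
      else 0 := by
  have hζ : IsPrimitiveRoot (Complex.exp (2 * Real.pi * Complex.I / p)) p :=
    Complex.isPrimitiveRoot_exp p hp0
  set ζ := Complex.exp (2 * Real.pi * Complex.I / p) with hζdef
  have hζ0 : ζ ≠ 0 := Complex.exp_ne_zero _
  have hmod : ∀ a b : ℕ, a ≡ b [MOD p] → ζ ^ a = ζ ^ b := by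
    intro a b hab
    calc ζ ^ a = ζ ^ (a % orderOf ζ) := (pow_mod_orderOf ζ a).symm
      _ = ζ ^ (b % orderOf ζ) := by rw [← hζ.eq_orderOf]; exact congrArg (ζ ^ ·) hab
      _ = ζ ^ b := pow_mod_orderOf ζ b
  have hpow : ∀ m n : ℕ, ζ ^ ((m % p) * n) = ζ ^ (m * n) := fun m n =>
    hmod _ _ (Nat.ModEq.mul_right n (Nat.mod_modEq m p))
  have hsum : ∀ (m : ℕ), ∑ l : Fin p, (if m % p = l.val then dft p l j else 0)
      = (((Real.sqrt p : ℝ) : ℂ))⁻¹ * ζ ^ (m * j.val) := by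
    intro m
    rw [Finset.sum_eq_single (⟨m % p, Nat.mod_lt m (Nat.pos_of_ne_zero hp0)⟩ : Fin p)]
    · rw [if_pos rfl]; show _ * ζ ^ (m % p * j.val) = _; rw [hpow]
    · intro l _ hl
      rw [if_neg]
      intro hc; exact hl (Fin.ext hc.symm)
    · simp
  have hAF : ∀ k : Fin p, (foldAdj p * dft p) k j
      = (((Real.sqrt p : ℝ) : ℂ))⁻¹ * (ζ ^ (2 * k.val * j.val) * (1 + ζ ^ j.val)) := by
    intro k
    rw [Matrix.mul_apply]
    simp only [foldAdj, add_mul, ite_mul, one_mul, zero_mul]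
    rw [Finset.sum_add_distrib, hsum, hsum,
      show (2 * k.val + 1) * j.val = 2 * k.val * j.val + j.val by ring, pow_add]
    ring
  rw [Matrix.mul_assoc, Matrix.mul_apply]
  have key : ∀ k : Fin p, dftInv p i k * ((foldAdj p * dft p) k j)
      = ((p:ℂ)⁻¹ * (1 + ζ ^ (j:ℕ))) * (ζ ^ (2 * j.val) * (ζ ^ (i.val))⁻¹) ^ (k:ℕ) := by
    intro k
    rw [hAF k]
    simp only [dftInv, mul_pow, inv_pow, ← pow_mul]
    rw [show 2 * j.val * k.val = 2 * k.val * j.val by ring, ← sqrt_mul_self' hp0]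
    ring
  rw [Finset.sum_congr rfl (fun k _ => key k), ← Finset.mul_sum]
  have h1 : ∀ m : ℕ, ζ ^ (m * p) = 1 := fun m => by
    rw [pow_mul', hζ.pow_eq_one, one_pow]
  have hw : (ζ ^ (2 * j.val) * (ζ ^ (i.val))⁻¹) ^ p = 1 := by
    rw [mul_pow, ← pow_mul, inv_pow, ← pow_mul, h1, h1, inv_one, mul_one]
  rw [geom_fin _ hw]
  have hcond : (ζ ^ (2 * j.val) * (ζ ^ (i.val))⁻¹ = 1) ↔ (2 * j.val) % p = i.val := by
    rw [mul_inv_eq_one₀ (pow_ne_zero _ hζ0)]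
    constructor
    · intro h
      have h2 : ζ ^ (2 * j.val % p) = ζ ^ (i.val % p) := by
        rw [hmod _ _ (Nat.mod_modEq _ p), hmod _ _ (Nat.mod_modEq _ p), h]
      have := hζ.pow_inj (Nat.mod_lt _ (Nat.pos_of_ne_zero hp0))
        (Nat.mod_lt _ (Nat.pos_of_ne_zero hp0)) h2
      rwa [Nat.mod_eq_of_lt i.isLt] at this
    · intro h
      exact hmod _ _ (show 2 * j.val % p = i.val % p from
        h.trans (Nat.mod_eq_of_lt i.isLt).symm)
  split_ifs with h1 h2 h2
  · rw [mul_comm ((p:ℂ)⁻¹) _, mul_assoc, inv_mul_cancel₀ (Nat.cast_ne_zero.mpr hp0), mul_one]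
  · exact absurd (hcond.mp h1) h2
  · exact absurd (hcond.mpr h2) h1
  · rw [mul_zero]

theorem dft_conj_foldAdjAux (p : ℕ) (hp : Odd p) :
    (∀ i j : Fin p,
        ((dft p)⁻¹ * foldAdj p * dft p) i j =
          if (2 * j.val) % p = i.val then
            1 + Complex.exp (2 * Real.pi * Complex.I / p) ^ j.val
          else 0) ∧
      (∀ i : Fin p, ∃! j : Fin p, ((dft p)⁻¹ * foldAdj p * dft p) i j ≠ 0) ∧
      (∀ j : Fin p, ∃! i : Fin p, ((dft p)⁻¹ * foldAdj p * dft p) i j ≠ 0) := by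
  have hp0 : p ≠ 0 := hp.pos.ne'
  have hppos : 0 < p := hp.pos
  have hζ : IsPrimitiveRoot (Complex.exp (2 * Real.pi * Complex.I / p)) p :=
    Complex.isPrimitiveRoot_exp p hp0
  set ζ := Complex.exp (2 * Real.pi * Complex.I / p) with hζdef
  have hinv : (dft p)⁻¹ = dftInv p := Matrix.inv_eq_left_inv (leftInv hp0)
  have hmain : ∀ i j : Fin p, ((dft p)⁻¹ * foldAdj p * dft p) i j =
      if (2 * j.val) % p = i.val then 1 + ζ ^ j.val else 0 := by
    intro i j; rw [hinv]; exact entry hp0 i j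
  have hne : ∀ j : Fin p, 1 + ζ ^ j.val ≠ 0 := by
    intro j h
    have hm1 : ζ ^ j.val = -1 := by linear_combination h
    have h2 : ζ ^ (j.val * 2) = 1 := by rw [pow_mul, hm1]; ring
    have hdvd : p ∣ j.val * 2 := hζ.dvd_of_pow_eq_one _ h2
    have hcop : Nat.Coprime p 2 := hp.coprime_two_right
    have : p ∣ j.val := hcop.dvd_of_dvd_mul_right hdvd
    have hj0 : j.val = 0 := Nat.eq_zero_of_dvd_of_lt this j.isLt |> fun h => h
    rw [hj0, pow_zero] at hm1
    norm_num at hm1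
  have hcond : ∀ i j : Fin p, (((dft p)⁻¹ * foldAdj p * dft p) i j ≠ 0 ↔ (2 * j.val) % p = i.val) := by
    intro i j
    rw [hmain i j]
    split_ifs with h
    · simpa [h] using hne j
    · simp [h]
  have hkey : ∀ i : ℕ, i < p → (2 * (((p + 1) / 2 * i) % p)) % p = i := by
    intro i hi
    have heven : (p + 1) / 2 * 2 = p + 1 := Nat.div_two_mul_two_of_even (hp.add_one)
    have hme : 2 * (((p + 1) / 2 * i) % p) ≡ i [MOD p] := by
      calc 2 * (((p + 1) / 2 * i) % p)
          ≡ 2 * ((p + 1) / 2 * i) [MOD p] := (Nat.mod_modEq _ p).mul_left 2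
        _ = (p + 1) * i := by rw [← mul_assoc, mul_comm 2 ((p+1)/2), heven]
        _ = i + i * p := by ring
        _ ≡ i [MOD p] := by
            show (i + i * p) % p = i % p
            rw [Nat.add_mul_mod_self_right]
    have h' : (2 * (((p + 1) / 2 * i) % p)) % p = i % p := hme
    rw [Nat.mod_eq_of_lt hi] at h'
    exact h'
  have hcop : Nat.Coprime 2 p := hp.coprime_two_left
  refine ⟨hmain, ?_, ?_⟩
  · intro i
    have hlt : ((p + 1) / 2 * i.val) % p < p := Nat.mod_lt _ hppos
    refine ⟨⟨((p + 1) / 2 * i.val) % p, hlt⟩, (hcond i _).mpr (hkey i.val i.isLt), ?_⟩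
    intro j' hj'
    rw [hcond] at hj'
    have h2j : 2 * j'.val ≡ 2 * (((p + 1) / 2 * i.val) % p) [MOD p] := by
      have ha : (2 * j'.val) % p = (2 * (((p + 1) / 2 * i.val) % p)) % p := by
        rw [hj', hkey i.val i.isLt]
      exact ha
    have := (Nat.ModEq.cancel_left_of_coprime (by simpa using hcop) h2j).eq_of_lt_of_lt
      j'.isLt hlt
    exact Fin.ext this
  · intro j
    refine ⟨⟨(2 * j.val) % p, Nat.mod_lt _ hppos⟩, (hcond _ j).mpr rfl, ?_⟩
    intro i' hi'
    rw [hcond] at hi'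
    exact Fin.ext hi'.symm

/-- Conjugating `A_p` by the DFT matrix gives
`(Ã_p)_{i,j} = 1 + ξ^j` if `i ≡ 2j (mod p)` and `0` otherwise; in particular
`Ã_p` is a generalized permutation matrix. -/
theorem dft_conj_foldAdj (p : ℕ) (hp : Odd p) :
    (∀ i j : Fin p,
        ((dft p)⁻¹ * foldAdj p * dft p) i j =
          if (2 * j.val) % p = i.val then
            1 + Complex.exp (2 * Real.pi * Complex.I / p) ^ j.val
          else 0) ∧
      (∀ i : Fin p, ∃! j : Fin p, ((dft p)⁻¹ * foldAdj p * dft p) i j ≠ 0) ∧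
      (∀ j : Fin p, ∃! i : Fin p, ((dft p)⁻¹ * foldAdj p * dft p) i j ≠ 0) := by
  exact dft_conj_foldAdjAux p hp
end

section
/- Let p be odd and A_p the p×p matrix with (A_p)_{i,j} = |{μ ∈ {0,1} : 2i+μ ≡ j (mod p)}|. Then A_p has a simple eigenvalue 2, and the remaining p−1 eigenvalues are all roots of unity: for each cycle of length c ≥ 1 (other than the fixed point 0) of the permutation j ↦ 2j (mod p) on {0,...,p−1}, the characteristic polynomial of A_p has the factor λ^c − 1. -/
open Matrix Polynomial Finset

namespace FoldAdjAux

noncomputable section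

variable {p : ℕ}

/-- The twisted shift matrix conjugate to `foldAdj`. -/
def Bmat (p : ℕ) (ω : ℂ) : Matrix (Fin p) (Fin p) ℂ :=
  Matrix.of fun l k => if (2 * k.val) % p = l.val then 1 + ω ^ k.val else 0

/-- The DFT / Vandermonde matrix. -/
def Vmat (p : ℕ) (ω : ℂ) : Matrix (Fin p) (Fin p) ℂ :=
  Matrix.vandermonde fun i => ω ^ i.val

lemma pow_mod {ω : ℂ} (hω : IsPrimitiveRoot ω p) (a : ℕ) : ω ^ (a % p) = ω ^ a := by
  conv_rhs => rw [← Nat.div_add_mod a p]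
  rw [pow_add, pow_mul, hω.pow_eq_one, one_pow, one_mul]

lemma pow_congr {ω : ℂ} (hω : IsPrimitiveRoot ω p) {a b : ℕ} (h : a ≡ b [MOD p]) :
    ω ^ a = ω ^ b := by
  rw [← pow_mod hω a, ← pow_mod hω b]
  exact congrArg (ω ^ ·) h

lemma sum_ind {M : Type*} [AddCommMonoid M] {m : ℕ} (a : ℕ) (ha : a < m) (g : Fin m → M) :
    (∑ j : Fin m, if a = j.val then g j else 0) = g ⟨a, ha⟩ := by
  have h : ∀ j : Fin m, (if a = j.val then g j else 0)
      = if (⟨a, ha⟩ : Fin m) = j then g j else 0 := by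
    intro j
    exact if_congr (by simp [Fin.ext_iff]) rfl rfl
  simp_rw [h]
  simp

lemma Vdet {ω : ℂ} (hω : IsPrimitiveRoot ω p) : (Vmat p ω).det ≠ 0 := by
  rw [Vmat, Matrix.det_vandermonde_ne_zero_iff]
  intro i j hij
  exact Fin.ext (hω.pow_inj i.isLt j.isLt hij)

lemma mulAV (hp0 : 0 < p) {ω : ℂ} (hω : IsPrimitiveRoot ω p) :
    foldAdj p * Vmat p ω = Vmat p ω * Bmat p ω := by
  ext i k
  rw [Matrix.mul_apply, Matrix.mul_apply]
  have hL : ∀ j : Fin p, foldAdj p i j * Vmat p ω j k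
      = (if (2 * i.val) % p = j.val then Vmat p ω j k else 0)
        + (if (2 * i.val + 1) % p = j.val then Vmat p ω j k else 0) := by
    intro j
    simp [foldAdj, add_mul, ite_mul]
  have hR : ∀ l : Fin p, Vmat p ω i l * Bmat p ω l k
      = if (2 * k.val) % p = l.val then Vmat p ω i l * (1 + ω ^ k.val) else 0 := by
    intro l
    simp [Bmat, mul_ite]
  simp_rw [hL, hR]
  rw [Finset.sum_add_distrib, sum_ind _ (Nat.mod_lt _ hp0), sum_ind _ (Nat.mod_lt _ hp0),
    sum_ind _ (Nat.mod_lt _ hp0)]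
  simp only [Vmat, Matrix.vandermonde_apply]
  have e1 : (ω ^ ((2 * i.val) % p)) ^ k.val = ω ^ (2 * i.val * k.val) := by
    rw [← pow_mul]
    exact pow_congr hω ((Nat.mod_modEq _ p).mul_right _)
  have e2 : (ω ^ ((2 * i.val + 1) % p)) ^ k.val = ω ^ ((2 * i.val + 1) * k.val) := by
    rw [← pow_mul]
    exact pow_congr hω ((Nat.mod_modEq _ p).mul_right _)
  have e3 : (ω ^ i.val) ^ ((2 * k.val) % p) = ω ^ (i.val * (2 * k.val)) := by
    rw [← pow_mul]
    exact pow_congr hω ((Nat.mod_modEq _ p).mul_left _)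
  rw [e1, e2, e3, mul_add, mul_one, ← pow_add]
  have h1 : 2 * i.val * k.val = i.val * (2 * k.val) := by ring
  have h2 : (2 * i.val + 1) * k.val = i.val * (2 * k.val) + k.val := by ring
  rw [h1, h2]

lemma charpoly_AB (hp0 : 0 < p) {ω : ℂ} (hω : IsPrimitiveRoot ω p) :
    (foldAdj p).charpoly = (Bmat p ω).charpoly := by
  have hscalar : ∀ M : Matrix (Fin p) (Fin p) ℂ[X],
      Matrix.scalar (Fin p) (X : ℂ[X]) * M = M * Matrix.scalar (Fin p) X := by
    intro M
    exact (Matrix.scalar_commute (X : ℂ[X]) (fun r => mul_comm _ r) M)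
  have hmain : charmatrix (foldAdj p) * (Vmat p ω).map C
      = (Vmat p ω).map C * charmatrix (Bmat p ω) := by
    unfold charmatrix
    rw [sub_mul, mul_sub, hscalar]
    congr 1
    simp only [RingHom.mapMatrix_apply]
    rw [← Matrix.map_mul, ← Matrix.map_mul, mulAV hp0 hω]
  have hdet := congrArg Matrix.det hmain
  rw [Matrix.det_mul, Matrix.det_mul] at hdet
  have hVC : ((Vmat p ω).map C).det ≠ 0 := by
    rw [show (Vmat p ω).map ⇑C = (C : ℂ →+* ℂ[X]).mapMatrix (Vmat p ω) from rfl,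
      ← RingHom.map_det]
    simpa using Vdet hω
  exact mul_left_cancel₀ hVC
    (by rw [Matrix.charpoly, Matrix.charpoly, ← hdet, mul_comm])

lemma telescope (ω : ℂ) (k : ℕ) (t : ℕ) :
    (1 - ω ^ k) * ∏ s ∈ Finset.range t, (1 + ω ^ (2 ^ s * k)) = 1 - ω ^ (2 ^ t * k) := by
  induction t with
  | zero => simp
  | succ t ih =>
    rw [Finset.prod_range_succ, ← mul_assoc, ih]
    have h1 : (2:ℕ) ^ (t+1) * k = (2 ^ t * k) * 2 := by ring
    rw [h1, pow_mul]
    ring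

lemma prod_one {ω : ℂ} (hω : IsPrimitiveRoot ω p) (k t : ℕ) (hk : ¬ p ∣ k)
    (hcyc : 2 ^ t * k % p = k % p) :
    ∏ s ∈ Finset.range t, (1 + ω ^ (2 ^ s * k)) = 1 := by
  have h1 : ω ^ (2 ^ t * k) = ω ^ k := pow_congr hω hcyc
  have h2 : (1 : ℂ) - ω ^ k ≠ 0 := by
    rw [sub_ne_zero]
    intro h
    exact hk ((hω.pow_eq_one_iff_dvd k).mp h.symm)
  have h3 := telescope ω k t
  rw [h1] at h3
  exact mul_left_cancel₀ h2 (by rw [h3, mul_one])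

lemma Bmat_pow (hp0 : 0 < p) {ω : ℂ} (hω : IsPrimitiveRoot ω p) (t : ℕ) :
    (Bmat p ω) ^ t = Matrix.of fun l k : Fin p =>
      if (2 ^ t * k.val) % p = l.val then
        (∏ s ∈ Finset.range t, (1 + ω ^ (2 ^ s * k.val))) else 0 := by
  induction t with
  | zero =>
    ext l k
    simp only [pow_zero, Matrix.of_apply, one_mul, Finset.range_zero, Finset.prod_empty,
      Nat.mod_eq_of_lt k.isLt]
    rw [Matrix.one_apply]
    exact if_congr (by simp [Fin.ext_iff, eq_comm]) rfl rfl
  | succ t ih =>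
    rw [pow_succ', ih]
    ext l k
    rw [Matrix.mul_apply]
    have hterm : ∀ m : Fin p, Bmat p ω l m * (Matrix.of fun l k : Fin p =>
        if (2 ^ t * k.val) % p = l.val then
          (∏ s ∈ Finset.range t, (1 + ω ^ (2 ^ s * k.val))) else 0) m k
        = if (2 ^ t * k.val) % p = m.val then
            (Bmat p ω l m * ∏ s ∈ Finset.range t, (1 + ω ^ (2 ^ s * k.val))) else 0 := by
      intro m
      simp only [Matrix.of_apply, mul_ite, mul_zero]
    simp_rw [hterm]
    rw [sum_ind _ (Nat.mod_lt _ hp0)]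
    simp only [Bmat, Matrix.of_apply]
    have hmod : (2 * ((2 ^ t * k.val) % p)) % p = (2 ^ (t+1) * k.val) % p := by
      have h2 : (2:ℕ) ^ (t+1) * k.val = 2 * (2 ^ t * k.val) := by ring
      rw [h2]
      exact ((Nat.mod_modEq _ p).mul_left 2)
    have hωe : ω ^ ((2 ^ t * k.val) % p) = ω ^ (2 ^ t * k.val) := pow_mod hω _
    rw [hmod, hωe, Finset.prod_range_succ]
    split_ifs with h
    · ring
    · simp

lemma eval_charpoly {n : Type*} [Fintype n] [DecidableEq n] (M : Matrix n n ℂ) (μ : ℂ) :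
    M.charpoly.eval μ = (Matrix.diagonal (fun _ => μ) - M).det := by
  rw [Matrix.charpoly, ← Polynomial.coe_evalRingHom, RingHom.map_det]
  congr 1
  ext i j
  by_cases h : i = j <;>
    simp [h, charmatrix_apply, Matrix.diagonal_apply, Matrix.map_apply, Matrix.sub_apply]

lemma isRoot_of_eig {n : Type*} [Fintype n] [DecidableEq n] (M : Matrix n n ℂ) (μ : ℂ)
    (v : n → ℂ) (hv : v ≠ 0) (hMv : M *ᵥ v = μ • v) : M.charpoly.IsRoot μ := by
  rw [Polynomial.IsRoot, eval_charpoly, ← Matrix.exists_mulVec_eq_zero_iff]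
  refine ⟨v, hv, ?_⟩
  rw [Matrix.sub_mulVec, hMv]
  ext i
  simp [Matrix.mulVec_diagonal]

lemma exists_eig_of_isRoot {n : Type*} [Fintype n] [DecidableEq n] (M : Matrix n n ℂ) (μ : ℂ)
    (h : M.charpoly.IsRoot μ) : ∃ v, v ≠ 0 ∧ M *ᵥ v = μ • v := by
  rw [Polynomial.IsRoot, eval_charpoly] at h
  obtain ⟨v, hv, hv2⟩ := Matrix.exists_mulVec_eq_zero_iff.mpr h
  refine ⟨v, hv, ?_⟩
  rw [Matrix.sub_mulVec, sub_eq_zero] at hv2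
  rw [← hv2]
  ext i
  simp [Matrix.mulVec_diagonal]

lemma eig_pow {n : Type*} [Fintype n] [DecidableEq n] (M : Matrix n n ℂ) (μ : ℂ)
    (v : n → ℂ) (hMv : M *ᵥ v = μ • v) (t : ℕ) : (M ^ t) *ᵥ v = μ ^ t • v := by
  induction t with
  | zero => simp
  | succ t ih =>
    rw [pow_succ', ← Matrix.mulVec_mulVec, ih, Matrix.mulVec_smul, hMv, smul_smul, ← pow_succ]

lemma key (p : ℕ) (hp : Odd p) :
    ∃ g : ℂ[X], (foldAdj p).charpoly = (X - C 2) * g ∧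
      ∀ lam : ℂ, g.IsRoot lam → lam ^ p.totient = 1 := by
  have hp0 : 0 < p := Nat.pos_of_ne_zero (by rintro rfl; simp [Nat.odd_iff] at hp)
  obtain ⟨ω, hω⟩ : ∃ ω : ℂ, IsPrimitiveRoot ω p :=
    ⟨_, Complex.isPrimitiveRoot_exp p hp0.ne'⟩
  set N := p.totient with hNdef
  have hN : 0 < N := Nat.totient_pos.mpr hp0
  have hcop : Nat.Coprime 2 p := Nat.coprime_two_left.mpr hp
  have hmod : ∀ m : ℕ, 2 ^ N * m % p = m % p := by
    intro m
    have h1 : (2:ℕ) ^ N ≡ 1 [MOD p] := Nat.ModEq.pow_totient hcop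
    exact (by simpa using h1.mul_right m : 2 ^ N * m ≡ m [MOD p])
  have hsum : 1 + (p - 1) = p := by omega
  set e : (Fin 1 ⊕ Fin (p - 1)) ≃ Fin p := finSumFinEquiv.trans (finCongr hsum) with he
  have he_inl : ∀ i : Fin 1, (e (Sum.inl i)).val = 0 := by
    intro i
    simp [he, Fin.val_eq_zero i]
  have he_inr : ∀ i : Fin (p - 1), (e (Sum.inr i)).val = 1 + i.val := by
    intro i
    simp [he]
  set B := Bmat p ω with hB
  set B' : Matrix (Fin (p-1)) (Fin (p-1)) ℂ :=
    Matrix.of (fun i j => B (e (Sum.inr i)) (e (Sum.inr j))) with hB'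
  have hblocks : B.submatrix e e
      = Matrix.fromBlocks (Matrix.of fun _ _ : Fin 1 => (2:ℂ)) 0 0 B' := by
    ext i j
    cases i with
    | inl i =>
      cases j with
      | inl j =>
        simp only [Matrix.submatrix_apply, Matrix.fromBlocks_apply₁₁, Matrix.of_apply,
          hB, Bmat, he_inl]
        norm_num
      | inr j =>
        simp only [Matrix.submatrix_apply, Matrix.fromBlocks_apply₁₂, Matrix.of_apply,
          hB, Bmat, he_inl, he_inr, Matrix.zero_apply]
        rw [if_neg]
        intro hdvd
        have hd : p ∣ 2 * (1 + j.val) := Nat.dvd_of_mod_eq_zero hdvd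
        have hj : p ∣ (1 + j.val) := (Nat.Coprime.dvd_of_dvd_mul_left (by
          exact Nat.Coprime.symm hcop) hd)
        have hlt : 1 + j.val < p := by omega
        exact absurd (Nat.le_of_dvd (by omega) hj) (by omega)
    | inr i =>
      cases j with
      | inl j =>
        simp only [Matrix.submatrix_apply, Matrix.fromBlocks_apply₂₁, Matrix.of_apply,
          hB, Bmat, he_inl, he_inr, Matrix.zero_apply]
        rw [if_neg (by simp only [mul_zero, Nat.zero_mod]; omega)]
      | inr j =>
        simp only [Matrix.submatrix_apply, Matrix.fromBlocks_apply₂₂, Matrix.of_apply, hB', hB]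
  have hcharB : B.charpoly = (X - C 2) * B'.charpoly := by
    have h1 : (B.submatrix e e).charpoly = B.charpoly := by
      have h := Matrix.charpoly_reindex (R := ℂ) e.symm B
      rw [Matrix.reindex_apply, Equiv.symm_symm] at h
      exact h
    rw [← h1, hblocks, Matrix.charpoly_fromBlocks_zero₁₂]
    congr 1
    rw [Matrix.charpoly, Matrix.det_fin_one]
    simp
  have hBN : B ^ N = Matrix.diagonal (fun k : Fin p => if k.val = 0 then (2:ℂ) ^ N else 1) := by
    rw [hB, Bmat_pow hp0 hω]
    ext l k
    simp only [Matrix.of_apply, Matrix.diagonal_apply]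
    by_cases hk : k.val = 0
    · rw [hk]
      simp only [mul_zero, Nat.zero_mod]
      have hprod : ∏ _s ∈ Finset.range N, ((1:ℂ) + ω ^ 0) = 2 ^ N := by
        norm_num
      rw [hprod]
      by_cases hl : (0:ℕ) = l.val
      · rw [if_pos hl, if_pos (show l = k from Fin.ext (by omega)), if_pos (by omega)]
      · rw [if_neg hl, if_neg (fun h => hl (by simp [h, hk]))]
    · have hnd : ¬ p ∣ k.val := by
        intro hd
        exact hk (by have := Nat.le_of_dvd (Nat.pos_of_ne_zero hk) hd; omega)
      have hprod := prod_one hω k.val N hnd (hmod k.val)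
      rw [hprod, hmod k.val, Nat.mod_eq_of_lt k.isLt]
      by_cases hlk : l = k
      · rw [if_pos (congrArg Fin.val hlk).symm, if_pos hlk,
          if_neg (show ¬ l.val = 0 by rw [hlk]; exact hk)]
      · rw [if_neg (fun h => hlk (Fin.ext h.symm)), if_neg hlk]
  have hsubpow : ∀ t : ℕ, (B.submatrix e e) ^ t = (B ^ t).submatrix e e := by
    intro t
    induction t with
    | zero => simp [Matrix.submatrix_one_equiv]
    | succ t ih => rw [pow_succ, pow_succ, ih, Matrix.submatrix_mul_equiv]
  have hfbpow : ∀ t : ℕ, (Matrix.fromBlocks (Matrix.of fun _ _ : Fin 1 => (2:ℂ)) 0 0 B') ^ t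
      = Matrix.fromBlocks ((Matrix.of fun _ _ : Fin 1 => (2:ℂ)) ^ t) 0 0 (B' ^ t) := by
    intro t
    induction t with
    | zero => simp [Matrix.fromBlocks_one]
    | succ t ih =>
      rw [pow_succ, ih, Matrix.fromBlocks_multiply]
      simp [pow_succ]
  have hB'N : B' ^ N = 1 := by
    have h2 : Matrix.fromBlocks ((Matrix.of fun _ _ : Fin 1 => (2:ℂ)) ^ N) 0 0 (B' ^ N)
        = (Matrix.diagonal (fun k : Fin p => if k.val = 0 then (2:ℂ) ^ N else 1)).submatrix e e := by
      rw [← hfbpow, ← hblocks, hsubpow, hBN]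
    ext i j
    have h3 := congrFun (congrFun h2 (Sum.inr i)) (Sum.inr j)
    simp only [Matrix.fromBlocks_apply₂₂, Matrix.submatrix_apply, Matrix.diagonal_apply] at h3
    rw [h3]
    by_cases hij : i = j
    · rw [hij, if_pos rfl, Matrix.one_apply_eq, if_neg (by rw [he_inr]; omega)]
    · rw [if_neg (fun h => hij (Sum.inr_injective (e.injective h))), Matrix.one_apply_ne hij]
  refine ⟨B'.charpoly, ?_, ?_⟩
  · rw [charpoly_AB hp0 hω, ← hB, hcharB]
  · intro lam hl
    obtain ⟨v, hv, hMv⟩ := exists_eig_of_isRoot _ _ hl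
    have hpw := eig_pow _ _ _ hMv N
    rw [hB'N, Matrix.one_mulVec] at hpw
    obtain ⟨i, hi⟩ := Function.ne_iff.mp hv
    have h4 := congrFun hpw i
    simp only [Pi.smul_apply, smul_eq_mul] at h4
    have h5 : (lam ^ N - 1) * v i = 0 := by rw [sub_mul, one_mul, ← h4, sub_self]
    rcases mul_eq_zero.mp h5 with h | h
    · linear_combination h
    · exact absurd h hi

lemma part3root (p : ℕ) (hp : Odd p) (j c : ℕ) (hj0 : 0 < j) (hjp : j < p) (hc : 0 < c)
    (hcyc : 2 ^ c * j % p = j % p)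
    (hmin : ∀ c', 0 < c' → 2 ^ c' * j % p = j % p → c ≤ c')
    (μ : ℂ) (hμ : μ ^ c = 1) : (foldAdj p).charpoly.IsRoot μ := by
  have hp0 : 0 < p := Nat.pos_of_ne_zero (by rintro rfl; simp [Nat.odd_iff] at hp)
  obtain ⟨ω, hω⟩ : ∃ ω : ℂ, IsPrimitiveRoot ω p :=
    ⟨_, Complex.isPrimitiveRoot_exp p hp0.ne'⟩
  rw [charpoly_AB hp0 hω]
  have hμ0 : μ ≠ 0 := by
    rintro rfl
    rw [zero_pow hc.ne'] at hμ
    exact zero_ne_one hμ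
  set B := Bmat p ω with hB
  set f : ℕ → Fin p := fun t => ⟨2 ^ t * j % p, Nat.mod_lt _ hp0⟩ with hf
  set w : ℕ → ℂ := fun t => 1 + ω ^ (2 ^ t * j) with hw
  set a : ℕ → ℂ := fun t => (∏ s ∈ Finset.range t, w s) / μ ^ t with ha
  set sgl : ℕ → (Fin p → ℂ) := fun t => Pi.single (f t) (1:ℂ) with hsgl
  set u : Fin p → ℂ := ∑ t ∈ Finset.range c, a t • sgl t with hu
  have ha0 : a 0 = 1 := by simp [ha]
  have hnd : ¬ p ∣ j := fun hd => by
    have := Nat.le_of_dvd hj0 hd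
    omega
  have hprod : ∏ s ∈ Finset.range c, ((1:ℂ) + ω ^ (2 ^ s * j)) = 1 :=
    prod_one hω j c hnd hcyc
  have hac : a c = 1 := by
    rw [ha]
    simp only
    rw [show (∏ s ∈ Finset.range c, w s) = 1 from hprod, hμ, div_one]
  have hfc : f c = f 0 := by
    apply Fin.ext
    show 2 ^ c * j % p = 2 ^ 0 * j % p
    simpa using hcyc
  have hft : ∀ t, t ∈ Finset.range c → t ≠ 0 → f t ≠ f 0 := by
    intro t ht ht0 hfe
    have hvals : 2 ^ t * j % p = j % p := by
      have := congrArg Fin.val hfe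
      simpa [hf] using this
    exact absurd (hmin t (Nat.pos_of_ne_zero ht0) hvals) (not_le.mpr (Finset.mem_range.mp ht))
  apply isRoot_of_eig B μ u
  · -- u ≠ 0
    intro h0
    have h1 : u (f 0) = 1 := by
      rw [hu, Finset.sum_apply]
      rw [Finset.sum_eq_single 0]
      · simp [ha0, hsgl]
      · intro t ht ht0
        have hne := hft t ht ht0
        simp only [hsgl, Pi.smul_apply, Pi.single_apply, smul_eq_mul]
        rw [if_neg (fun hcontra => hne hcontra.symm), mul_zero]
      · intro h
        exact absurd (Finset.mem_range.mpr hc) h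
    rw [h0] at h1
    simp at h1
  · -- B *ᵥ u = μ • u
    have hstep : ∀ t, B *ᵥ (sgl t) = w t • sgl (t+1) := by
      intro t
      rw [hsgl]
      simp only
      rw [Matrix.mulVec_single]
      funext l
      simp only [Pi.smul_apply, Pi.single_apply, smul_eq_mul, mul_one]
      simp only [MulOpposite.op_one, one_smul]
      show Bmat p ω l (f t) = _
      rw [Bmat]
      simp only [Matrix.of_apply]
      have hval : (f t).val = 2 ^ t * j % p := rfl
      have hmod2 : (2 * ((f t).val)) % p = (f (t+1)).val := by
        rw [hval]
        show 2 * (2 ^ t * j % p) % p = 2 ^ (t+1) * j % p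
        have h2 : (2:ℕ) ^ (t+1) * j = 2 * (2 ^ t * j) := by ring
        rw [h2]
        exact ((Nat.mod_modEq _ p).mul_left 2)
      have hωval : (1:ℂ) + ω ^ ((f t).val) = w t := by
        rw [hval, pow_mod hω, hw]
      rw [hmod2, hωval]
      rcases eq_or_ne l (f (t+1)) with h | h
      · rw [if_pos (congrArg Fin.val h).symm, if_pos h, mul_one]
      · rw [if_neg (fun hv => h (Fin.ext hv.symm)), if_neg h, mul_zero]
    have hBu : B *ᵥ u = ∑ t ∈ Finset.range c, (a t * w t) • sgl (t+1) := by
      rw [hu, show B *ᵥ (∑ t ∈ Finset.range c, a t • sgl t)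
          = B.mulVecLin (∑ t ∈ Finset.range c, a t • sgl t) from rfl,
        map_sum]
      refine Finset.sum_congr rfl fun t _ => ?_
      rw [_root_.map_smul, Matrix.mulVecLin_apply, hstep t, smul_smul]
    have hshift : ∀ t, a t * w t = μ * a (t + 1) := by
      intro t
      rw [ha]
      simp only
      rw [Finset.prod_range_succ, pow_succ]
      field_simp
    rw [hBu]
    have hcongr : ∀ t ∈ Finset.range c, (a t * w t) • sgl (t+1)
        = μ • (a (t+1) • sgl (t+1)) := by
      intro t _
      rw [hshift t, mul_smul]
    rw [Finset.sum_congr rfl hcongr, ← Finset.smul_sum]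
    congr 1
    have h1 := Finset.sum_range_succ' (fun t => a t • sgl t) c
    have h2 := Finset.sum_range_succ (fun t => a t • sgl t) c
    have h3 : a c • sgl c = a 0 • sgl 0 := by
      rw [hac, ha0, hsgl]
      simp only
      rw [hfc]
    rw [h3] at h2
    rw [hu]
    exact add_right_cancel (h1.symm.trans h2)

end

end FoldAdjAux

open FoldAdjAux

/-- For `p` odd, `A_p` has a simple eigenvalue `2`; every other eigenvalue is a
root of unity; and for each cycle of length `c` (other than the fixed point `0`)
of the doubling map `j ↦ 2j (mod p)`, the characteristic polynomial of `A_p`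
has the factor `λ^c − 1`. -/
theorem foldAdj_eigenvalues (p : ℕ) (hp : Odd p) :
    ((foldAdj p).charpoly.rootMultiplicity 2 = 1) ∧
      (∀ lam : ℂ, (foldAdj p).charpoly.IsRoot lam → lam ≠ 2 →
        ∃ k : ℕ, 0 < k ∧ lam ^ k = 1) ∧
      (∀ j c : ℕ, 0 < j → j < p → 0 < c →
        2 ^ c * j % p = j % p →
        (∀ c', 0 < c' → 2 ^ c' * j % p = j % p → c ≤ c') →
        ((X : Polynomial ℂ) ^ c - 1) ∣ (foldAdj p).charpoly) := by
  have hp0 : 0 < p := Nat.pos_of_ne_zero (by rintro rfl; simp [Nat.odd_iff] at hp)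
  obtain ⟨g, hg, hroots⟩ := key p hp
  have hN : 0 < p.totient := Nat.totient_pos.mpr hp0
  have h2N : ((2:ℂ)) ^ p.totient ≠ 1 := by
    intro h
    have h1 : ((2 ^ p.totient : ℕ) : ℂ) = ((1 : ℕ) : ℂ) := by push_cast; simpa using h
    have h2 : (2:ℕ) ^ p.totient = 1 := by exact_mod_cast h1
    have h3 : 1 < 2 ^ p.totient := Nat.one_lt_two_pow_iff.mpr hN.ne'
    omega
  have hg2 : ¬ g.IsRoot 2 := fun h => h2N (hroots 2 h)
  refine ⟨?_, ?_, ?_⟩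
  · rw [hg, Polynomial.rootMultiplicity_mul (by rw [← hg]; exact (Matrix.charpoly_monic _).ne_zero)]
    rw [Polynomial.rootMultiplicity_eq_zero hg2]
    have : ((X : ℂ[X]) - C 2).rootMultiplicity 2 = 1 := by
      rw [Polynomial.rootMultiplicity_X_sub_C]
      simp
    omega
  · intro lam hroot hne
    rw [hg, Polynomial.IsRoot, Polynomial.eval_mul] at hroot
    rcases mul_eq_zero.mp hroot with h | h
    · exfalso
      apply hne
      have : lam - 2 = 0 := by simpa using h
      linear_combination this
    · exact ⟨p.totient, hN, hroots lam h⟩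
  · intro j c hj0 hjp hc hcyc hmin
    obtain ⟨ζ, hζ⟩ : ∃ ζ : ℂ, IsPrimitiveRoot ζ c :=
      ⟨_, Complex.isPrimitiveRoot_exp c hc.ne'⟩
    rw [Polynomial.X_pow_sub_one_eq_prod hc hζ]
    apply Finset.prod_dvd_of_coprime
    · intro x hx y hy hxy
      exact Polynomial.isCoprime_X_sub_C_of_isUnit_sub ((sub_ne_zero.mpr hxy).isUnit)
    · intro μ hμmem
      rw [Polynomial.dvd_iff_isRoot]
      have hμc : μ ^ c = 1 := (Polynomial.mem_nthRootsFinset hc (1:ℂ)).mp hμmem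
      exact part3root p hp j c hj0 hjp hc hcyc hmin μ hμc
end
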